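/- arXiv:1905.03612 — 9 statements merged into one kernel-verified Lean document; each statement's English description precedes it below -/
import Mathlib

section
/- Let H=(V,E) be a simple countable k-uniform hypergraph with k ≥ 2 that has property C_2. Then for every injection φ: E → ℕ there exists an infinite loose path e_1, e_2, ... in H with φ(e_i) < φ(e_{i+1}) for all i ≥ 1. -/
/-- Property `C_ℓ` of a `k`-uniform hypergraph with edge set `E`: there is a nonempty set of
vertices `V'` such that every `v ∈ V'` lies in infinitely many edges `e` with `|V' ∩ e| ≥ ℓ`. -/
def PropC {V : Type*} (E : Set (Finset V)) (ℓ : ℕ) : Prop :=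
  ∃ V' : Set V, V'.Nonempty ∧
    ∀ v ∈ V', {e | e ∈ E ∧ v ∈ e ∧ ℓ ≤ ((e : Set V) ∩ V').ncard}.Infinite

/-- The `i`-th edge of the infinite loose path with vertex sequence `w` (0-indexed):
`{w ((k-1)i), w ((k-1)i + 1), …, w ((k-1)i + k - 1)}`. -/
def looseEdge {V : Type*} [DecidableEq V] (k : ℕ) (w : ℕ → V) (i : ℕ) : Finset V :=
  (Finset.range k).image fun j => w ((k - 1) * i + j)

/-- The edge of an infinite `(k-1)`-branching tree `x` at the node indexed by
the finite sequence `s`: `{x s} ∪ {x (a :: s) | a ∈ Fin (k-1)}`. -/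
def treeEdge {V : Type*} [DecidableEq V] (k : ℕ) (x : List (Fin (k - 1)) → V)
    (s : List (Fin (k - 1))) : Finset V :=
  insert (x s) (Finset.univ.image fun a : Fin (k - 1) => x (a :: s))

/-- A hypergraph is simple if any two distinct vertices lie together in at most one edge. -/
def SimpleHyper {V : Type*} (E : Set (Finset V)) : Prop :=
  ∀ e ∈ E, ∀ f ∈ E, ∀ u v : V, u ≠ v → u ∈ e → v ∈ e → u ∈ f → v ∈ f → e = f

/-!
Build the path greedily, one edge at a time. At a vertex `v ∈ V'`, property `C₂` gives infinitely
many edges through `v` containing a second vertex `u ∈ V'`. Only finitely many of them have a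
`φ`-value below a given bound (`φ` is injective), and only finitely many meet a previously used
vertex other than `v` (two vertices lie in at most one common edge). Taking any other such edge
and continuing from `u` gives edges with increasing `φ` in which consecutive edges share exactly
one vertex and non-consecutive ones are disjoint. Listing each edge from its entry vertex to its
exit vertex then gives the loose path.
-/

section

open Finset

variable {V : Type*}

theorem exists_seq_rel_succ {α : Type*} [Nonempty α] {R : α → α → Prop}
    (h : ∀ a, ∃ b, R a b) : ∃ f : ℕ → α, ∀ n, R (f n) (f (n + 1)) := by
  choose g hg using h
  exact ⟨fun n => g^[n] (Classical.arbitrary α), fun n => by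
    simp only [Function.iterate_succ_apply']; exact hg _⟩

theorem SimpleHyper.subsingleton_edges_through {E : Set (Finset V)} (hE : SimpleHyper E)
    {x y : V} (hxy : x ≠ y) : {e | e ∈ E ∧ x ∈ e ∧ y ∈ e}.Subsingleton :=
  fun e ⟨he, hxe, hye⟩ f ⟨hf, hxf, hyf⟩ => hE e he f hf x y hxy hxe hye hxf hyf

theorem Set.InjOn.finite_setOf_le {α : Type*} {s : Set α} {φ : α → ℕ} (hφ : Set.InjOn φ s)
    (m : ℕ) : {a | a ∈ s ∧ φ a ≤ m}.Finite :=
  Set.Finite.of_finite_image ((Set.finite_Iic m).subset (by rintro _ ⟨a, ⟨-, ha⟩, rfl⟩; exact ha))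
    (hφ.mono fun _ ha => ha.1)

theorem exists_edge_avoiding [DecidableEq V] {E : Set (Finset V)} (hE : SimpleHyper E)
    {φ : Finset V → ℕ} (hφ : Set.InjOn φ E) {V' : Set V} {v : V}
    (hv : {e | e ∈ E ∧ v ∈ e ∧ 2 ≤ ((e : Set V) ∩ V').ncard}.Infinite) (F : Finset V) (m : ℕ) :
    ∃ e ∈ E, ∃ u ∈ V', v ∈ e ∧ u ∈ e ∧ u ≠ v ∧ (∀ x ∈ F, x ∈ e → x = v) ∧ m < φ e := by
  have hmeet : (⋃ x ∈ F.erase v, {e | e ∈ E ∧ x ∈ e ∧ v ∈ e}).Finite :=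
    (F.erase v).finite_toSet.biUnion fun x hx =>
      (hE.subsingleton_edges_through (ne_of_mem_erase hx)).finite
  obtain ⟨e, ⟨he, hve, hcard⟩, hgood⟩ := (hv.sdiff ((hφ.finite_setOf_le m).union hmeet)).nonempty
  simp only [Set.mem_union, Set.mem_ofPred_eq, Set.mem_iUnion, not_or, not_and, not_le,
    Finset.mem_erase, exists_prop, not_exists] at hgood
  obtain ⟨u, ⟨hue, huV'⟩, huv⟩ := Set.exists_ne_of_one_lt_ncard hcard v
  refine ⟨e, he, u, huV', hve, hue, huv, fun x hx hxe => ?_, hgood.1 he⟩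
  by_contra hxv
  exact hgood.2 x ⟨hxv, hx⟩ he hxe hve

structure IsLooseChain (e : ℕ → Finset V) (v : ℕ → V) : Prop where
  left_mem : ∀ n, v n ∈ e n
  right_mem : ∀ n, v (n + 1) ∈ e n
  ne : ∀ n, v (n + 1) ≠ v n
  eq_of_mem : ∀ {n m x}, n < m → x ∈ e n → x ∈ e m → m = n + 1 ∧ x = v m

theorem isLooseChain_of_avoid [DecidableEq V] {e : ℕ → Finset V} {v : ℕ → V} {F : ℕ → Finset V}
    (hF : ∀ n, F (n + 1) = F n ∪ e n) (hleft : ∀ n, v n ∈ e n) (hright : ∀ n, v (n + 1) ∈ e n)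
    (hne : ∀ n, v (n + 1) ≠ v n) (havoid : ∀ n, ∀ x ∈ F n, x ∈ e n → x = v n) :
    IsLooseChain e v := by
  have hmono : Monotone F := monotone_nat_of_le_succ fun n => hF n ▸ subset_union_left
  have hsub : ∀ {n m}, n < m → e n ⊆ F m := fun h => (hF _ ▸ subset_union_right).trans (hmono h)
  refine ⟨hleft, hright, hne, fun {n m x} hnm hxn hxm => ?_⟩
  have hx : x = v m := havoid m x (hsub hnm hxn) hxm
  refine ⟨?_, hx⟩
  obtain ⟨p, rfl⟩ : ∃ p, m = p + 1 := Nat.exists_eq_add_one.2 (by omega)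
  by_contra hp
  -- `v (p + 1)` would be an earlier vertex of `e p`, so it could only be `v p`
  exact hne p (havoid p _ (hx ▸ hsub (by omega) hxn) (hright p))

theorem exists_isLooseChain [DecidableEq V] {E : Set (Finset V)} {V' : Set V} (hV' : V'.Nonempty)
    (φ : Finset V → ℕ) (hsel : ∀ v ∈ V', ∀ (F : Finset V) (m : ℕ),
      ∃ e ∈ E, ∃ u ∈ V', v ∈ e ∧ u ∈ e ∧ u ≠ v ∧ (∀ x ∈ F, x ∈ e → x = v) ∧ m < φ e) :
    ∃ (e : ℕ → Finset V) (v : ℕ → V), IsLooseChain e v ∧ (∀ n, e n ∈ E) ∧ StrictMono (φ ∘ e) := by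
  have : Nonempty V' := hV'.to_subtype
  -- a state records the current vertex, the vertices used so far and the last value of `φ`
  obtain ⟨s, hs⟩ := exists_seq_rel_succ (α := V' × Finset V × ℕ)
    (R := fun p q => ∃ e ∈ E, (p.1 : V) ∈ e ∧ (q.1 : V) ∈ e ∧ (q.1 : V) ≠ p.1 ∧
      (∀ x ∈ p.2.1, x ∈ e → x = p.1) ∧ p.2.2 < φ e ∧ q.2 = (p.2.1 ∪ e, φ e))
    fun ⟨⟨v, hv⟩, F, m⟩ => by
      obtain ⟨e, he, u, hu, hve, hue, huv, havoid, hm⟩ := hsel v hv F m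
      exact ⟨(⟨u, hu⟩, F ∪ e, φ e), e, he, hve, hue, huv, havoid, hm, rfl⟩
  choose e he hleft hright hne havoid hlt hnext using hs
  refine ⟨e, fun n => (s n).1, isLooseChain_of_avoid (F := fun n => (s n).2.1)
    (fun n => by rw [hnext]) hleft hright hne havoid, he,
    strictMono_nat_of_lt_succ fun n => ?_⟩
  simpa only [hnext, Function.comp_apply] using hlt (n + 1)

theorem List.image_range_getD [DecidableEq V] (l : List V) (d : V) :
    (Finset.range l.length).image (l.getD · d) = l.toFinset := by
  ext x
  simp only [mem_image, Finset.mem_range, List.mem_toFinset, List.mem_iff_getElem]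
  exact exists_congr fun j => ⟨fun ⟨hj, hx⟩ => ⟨hj, List.getD_eq_getElem _ _ hj ▸ hx⟩,
    fun ⟨hj, hx⟩ => ⟨hj, List.getD_eq_getElem _ _ hj ▸ hx⟩⟩

theorem Finset.exists_image_range_eq_of_mem [DecidableEq V] {s : Finset V} {a b : V}
    (ha : a ∈ s) (hb : b ∈ s) (hab : a ≠ b) :
    ∃ g : ℕ → V, g 0 = a ∧ g (s.card - 1) = b ∧ (range s.card).image g = s := by
  have hmid : ((s.erase a).erase b).card + 2 = s.card := by
    rw [card_erase_of_mem (mem_erase.2 ⟨hab.symm, hb⟩), card_erase_of_mem ha]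
    have : 1 < s.card := one_lt_card.2 ⟨a, ha, b, hb, hab⟩
    omega
  let l := a :: ((s.erase a).erase b).toList ++ [b]
  have hlen : l.length = s.card := by simp [l, ← hmid]
  have hl : l.toFinset = s := by
    ext x
    by_cases hxa : x = a
    · simp [l, hxa, ha]
    by_cases hxb : x = b
    · simp [l, hxb, hb]
    · simp [l, hxa, hxb]
  refine ⟨(l.getD · a), rfl, ?_, hlen ▸ hl ▸ l.image_range_getD a⟩
  rw [← hlen]
  simp [l]

section Concat

variable {k : ℕ} (g : ℕ → ℕ → V)

def concatBlocks (k : ℕ) (m : ℕ) : V := g (m / (k - 1)) (m % (k - 1))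

theorem looseEdge_concatBlocks [DecidableEq V] (hk : 2 ≤ k)
    (hlink : ∀ n, g n (k - 1) = g (n + 1) 0) (n : ℕ) :
    looseEdge k (concatBlocks g k) n = (range k).image (g n) := by
  refine image_congr fun j hj => ?_
  have hj : j < k := mem_range.1 hj
  rcases Nat.lt_or_ge j (k - 1) with hj' | hj'
  · simp only [concatBlocks, Nat.mul_add_div (by omega : 0 < k - 1), Nat.div_eq_of_lt hj',
      Nat.mul_add_mod, Nat.mod_eq_of_lt hj', add_zero]
  · obtain rfl : j = k - 1 := by omega
    rw [hlink, concatBlocks, ← Nat.mul_succ, Nat.mul_div_cancel_left _ (by omega),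
      Nat.mul_mod_right]

theorem injective_concatBlocks [DecidableEq V] (hk : 2 ≤ k)
    (hlink : ∀ n, g n (k - 1) = g (n + 1) 0) (hinj : ∀ n, Set.InjOn (g n) (Set.Iio k))
    (hmeet : ∀ {n m x}, n < m → x ∈ (range k).image (g n) → x ∈ (range k).image (g m) →
      m = n + 1 ∧ x = g m 0) :
    Function.Injective (concatBlocks g k) := by
  have hk1 : 0 < k - 1 := by omega
  intro a b hab
  wlog hle : a / (k - 1) ≤ b / (k - 1) generalizing a b
  · exact (this hab.symm (by omega)).symm
  have ha := Nat.mod_lt a hk1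
  have hb := Nat.mod_lt b hk1
  have hmem : ∀ c, g (c / (k - 1)) (c % (k - 1)) ∈ (range k).image (g (c / (k - 1))) :=
    fun c => mem_image_of_mem _ (mem_range.2 (by have := Nat.mod_lt c hk1; omega))
  unfold concatBlocks at hab
  rcases hle.eq_or_lt with heq | hlt
  · rw [heq] at hab
    have := hinj _ (show _ < k by omega) (show _ < k by omega) hab
    rw [← Nat.div_add_mod a (k - 1), ← Nat.div_add_mod b (k - 1), heq, this]
  · obtain ⟨hsucc, hx⟩ := hmeet hlt (hmem a) (hab ▸ hmem b)
    -- the common vertex is the first of block `b / (k - 1)`, i.e. the last of block `a / (k - 1)`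
    rw [hsucc, ← hlink] at hx
    have := hinj _ (show _ < k by omega) (show _ < k by omega) hx
    omega

end Concat

theorem IsLooseChain.exists_looseEdge_eq [DecidableEq V] {e : ℕ → Finset V} {v : ℕ → V}
    (hchain : IsLooseChain e v) {k : ℕ} (hk : 2 ≤ k) (hcard : ∀ n, (e n).card = k) :
    ∃ w : ℕ → V, Function.Injective w ∧ ∀ n, looseEdge k w n = e n := by
  choose g hg0 hglast hg using fun n =>
    exists_image_range_eq_of_mem (hchain.left_mem n) (hchain.right_mem n) (hchain.ne n).symm
  simp only [hcard] at hglast hg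
  have hlink : ∀ n, g n (k - 1) = g (n + 1) 0 := fun n => by rw [hglast, hg0]
  refine ⟨concatBlocks g k, injective_concatBlocks g hk hlink (fun n => ?_) ?_,
    fun n => (looseEdge_concatBlocks g hk hlink n).trans (hg n)⟩
  · rw [← coe_range, ← card_image_iff, hg, hcard, card_range]
  · intro n m x hnm hxn hxm
    rw [hg] at hxn hxm
    rw [hg0]
    exact hchain.eq_of_mem hnm hxn hxm

end

theorem stmt2_general {V : Type*} [DecidableEq V]
    (k : ℕ) (hk : 2 ≤ k) (E : Set (Finset V)) (hunif : ∀ e ∈ E, e.card = k)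
    (hsimple : SimpleHyper E) (hC2 : PropC E 2) :
    ∀ φ : Finset V → ℕ, Set.InjOn φ E →
      ∃ w : ℕ → V, Function.Injective w ∧ (∀ i, looseEdge k w i ∈ E) ∧
        ∀ i, φ (looseEdge k w i) < φ (looseEdge k w (i + 1)) := by
  intro φ hφ
  obtain ⟨V', hV'ne, hV'⟩ := hC2
  obtain ⟨e, v, hchain, hE, hφe⟩ := exists_isLooseChain hV'ne φ fun v hv =>
    exists_edge_avoiding hsimple hφ (hV' v hv)
  obtain ⟨w, hw, hwe⟩ := hchain.exists_looseEdge_eq hk fun n => hunif _ (hE n)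
  refine ⟨w, hw, fun i => hwe i ▸ hE i, fun i => ?_⟩
  rw [hwe, hwe]
  exact hφe i.lt_succ_self

theorem stmt2 {V : Type*} [Countable V] [Infinite V] [DecidableEq V]
    (k : ℕ) (hk : 2 ≤ k) (E : Set (Finset V)) (hunif : ∀ e ∈ E, e.card = k)
    (hsimple : SimpleHyper E) (hC2 : PropC E 2) :
    ∀ φ : Finset V → ℕ, Set.InjOn φ E →
      ∃ w : ℕ → V, Function.Injective w ∧ (∀ i, looseEdge k w i ∈ E) ∧
        ∀ i, φ (looseEdge k w i) < φ (looseEdge k w (i + 1)) :=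
  stmt2_general k hk E hunif hsimple hC2
end

section
/- Let H=(V,E) be a countable k-uniform hypergraph with k ≥ 2 in which every vertex belongs to only finitely many edges. Then there exists an injection φ: E → ℕ such that H contains no infinite loose path e_1, e_2, ... with φ(e_i) < φ(e_{i+1}) for all i ≥ 1. -/
/-!
Assign the edges levels `ℓ` with finite level sets such that `ℓ` grows by at most one
between intersecting edges (breadth-first from an enumeration of the edges).
Order the edges level by level, except that levels `2m` and `2m + 1` are exchanged. Along
an increasing path this order forces the level to be nondecreasing, and since the edges of
the path are distinct their levels are unbounded; so at some step the level goes from an even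
`M` to `M + 1`, which the swap makes a decrease in the order.
-/

section Levels

variable {α : Type*} (r : α → α → Prop)

def exhaustion (enc : α → ℕ) : ℕ → Set α
  | 0 => ∅
  | n + 1 => exhaustion enc n ∪ {a | enc a ≤ n} ∪ {b | ∃ a ∈ exhaustion enc n, r a b}

variable {r}

lemma exhaustion_mono (enc : α → ℕ) : Monotone (exhaustion r enc) :=
  monotone_nat_of_le_succ fun _ => Set.subset_union_left.trans Set.subset_union_left

lemma exhaustion_finite (hr : ∀ a, {b | r a b}.Finite) {enc : α → ℕ}
    (henc : Function.Injective enc) (n : ℕ) : (exhaustion r enc n).Finite := by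
  induction n with
  | zero => exact Set.finite_empty
  | succ n ih =>
    have hcode : {a | enc a ≤ n}.Finite := (Set.finite_Iic n).preimage henc.injOn
    have hnbhd : {b | ∃ a ∈ exhaustion r enc n, r a b}.Finite :=
      (ih.biUnion fun a _ => hr a).subset fun _ ⟨_, ha, hab⟩ => Set.mem_biUnion ha hab
    exact (ih.union hcode).union hnbhd

lemma exists_level_of_finite_rel [Countable α] (hr : ∀ a, {b | r a b}.Finite) :
    ∃ ℓ : α → ℕ, (∀ n, {a | ℓ a ≤ n}.Finite) ∧ ∀ a b, r a b → ℓ b ≤ ℓ a + 1 := by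
  obtain ⟨enc, henc⟩ := exists_injective_nat α
  let F := exhaustion r enc
  have hcover : ∀ a, {n | a ∈ F n}.Nonempty :=
    fun a => ⟨enc a + 1, .inl (.inr (le_refl (enc a)))⟩
  refine ⟨fun a => sInf {n | a ∈ F n}, fun n => ?_, fun a b hab => Nat.sInf_le ?_⟩
  · refine (exhaustion_finite hr henc n).subset fun a ha => ?_
    exact exhaustion_mono enc ha (Nat.sInf_mem (hcover a))
  · exact .inr ⟨a, Nat.sInf_mem (hcover a), hab⟩

end Levels

lemma exists_injective_lt_of_lt_of_finite_fiber {α : Type*} [Countable α] (c : α → ℕ)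
    (hc : ∀ m, {a | c a = m}.Finite) :
    ∃ φ : α → ℕ, Function.Injective φ ∧ ∀ a b, c a < c b → φ a < φ b := by
  obtain ⟨enc, henc⟩ := exists_injective_nat α
  -- `φ a` is the rank of `a` in the lexicographic order of `(c a, enc a)`.
  let key : α → ℕ ×ₗ ℕ := fun a => toLex (c a, enc a)
  have hkey : Function.Injective key := fun a b h => henc (congrArg (·.2) (toLex.injective h))
  have hbelow : ∀ a, {b | key b < key a}.Finite := fun a => by
    refine ((Set.finite_Iic (c a)).biUnion fun m _ => hc m).subset fun b hb => ?_
    refine Set.mem_biUnion (x := c b) ?_ rfl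
    rcases Prod.Lex.lt_iff.mp hb with h | h
    exacts [h.le, h.1.le]
  have hrank : ∀ a b, key a < key b → {x | key x < key a}.ncard < {x | key x < key b}.ncard :=
    fun a b hab => Set.ncard_lt_ncard ⟨fun x hx => lt_trans hx hab,
      fun h => lt_irrefl (key a) (h hab)⟩ (hbelow b)
  refine ⟨fun a => {x | key x < key a}.ncard, fun a b hab => hkey ?_, fun a b h => ?_⟩
  · rcases lt_trichotomy (key a) (key b) with h | h | h
    exacts [absurd hab (hrank a b h).ne, h, absurd hab (hrank b a h).ne']
  · exact hrank a b (Prod.Lex.lt_iff.mpr (.inl h))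

lemma exists_apply_eq_and_apply_succ_eq {f : ℕ → ℕ} (hf : ∀ i, f (i + 1) ≤ f i + 1) {M : ℕ}
    (h0 : f 0 ≤ M) {n : ℕ} (hn : M < f n) : ∃ i, f i = M ∧ f (i + 1) = M + 1 := by
  induction n with
  | zero => omega
  | succ n ih =>
    by_cases h : M < f n
    · exact ih h
    · exact ⟨n, by have := hf n; omega, by have := hf n; omega⟩

def swapParity (n : ℕ) : ℕ := if Even n then n + 1 else n - 1

lemma swapParity_involutive : Function.Involutive swapParity := fun n => by
  rcases Nat.even_or_odd n with h | h
  · have : ¬Even (n + 1) := Nat.not_even_iff_odd.mpr h.add_one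
    simp [swapParity, h, this]
  · obtain ⟨m, rfl⟩ := h
    simp [swapParity, show ¬Even (2 * m + 1) from Nat.not_even_iff_odd.mpr ⟨m, rfl⟩]

theorem exists_injective_not_strictMono_of_finite_rel {α : Type*} [Countable α]
    {r : α → α → Prop} (hr : ∀ a, {b | r a b}.Finite) :
    ∃ φ : α → ℕ, Function.Injective φ ∧
      ∀ x : ℕ → α, (∀ i, r (x i) (x (i + 1))) → ¬StrictMono (φ ∘ x) := by
  obtain ⟨ℓ, hℓfin, hℓr⟩ := exists_level_of_finite_rel hr
  have hfiber : ∀ m, {a | swapParity (ℓ a) = m}.Finite := fun m =>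
    (hℓfin (swapParity m)).subset fun a (ha : swapParity (ℓ a) = m) =>
      show ℓ a ≤ swapParity m by rw [← ha, swapParity_involutive]
  obtain ⟨φ, hφ, hφlt⟩ := exists_injective_lt_of_lt_of_finite_fiber _ hfiber
  refine ⟨φ, hφ, fun x hx hmono => ?_⟩
  have hunbdd : ∃ n, 2 * ℓ (x 0) < ℓ (x n) := by
    by_contra! h
    have hfin := (hℓfin (2 * ℓ (x 0))).preimage hmono.injective.of_comp.injOn
    exact Set.infinite_univ (hfin.subset fun n _ => h n)
  obtain ⟨n, hn⟩ := hunbdd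
  obtain ⟨i, hi, hi'⟩ : ∃ i, ℓ (x i) = 2 * ℓ (x 0) ∧ ℓ (x (i + 1)) = 2 * ℓ (x 0) + 1 :=
    exists_apply_eq_and_apply_succ_eq (fun i => hℓr _ _ (hx i)) (by omega) hn
  have hdrop : swapParity (ℓ (x (i + 1))) < swapParity (ℓ (x i)) := by
    rw [hi', hi, swapParity, swapParity, if_pos (even_two_mul _),
      if_neg (Nat.not_even_iff_odd.mpr (even_two_mul _).add_one)]
    omega
  exact (hφlt _ _ hdrop).not_gt (hmono (Nat.lt_succ_self i))

lemma looseEdge_not_disjoint_succ {V : Type*} [DecidableEq V] {k : ℕ} (hk : 0 < k)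
    (w : ℕ → V) (i : ℕ) : ¬Disjoint (looseEdge k w i) (looseEdge k w (i + 1)) := by
  refine Finset.not_disjoint_iff.mpr ⟨w ((k - 1) * (i + 1)), ?_, ?_⟩
  · exact Finset.mem_image.mpr ⟨k - 1, Finset.mem_range.mpr (by omega), by rw [Nat.mul_succ]⟩
  · exact Finset.mem_image.mpr ⟨0, Finset.mem_range.mpr hk, rfl⟩

lemma finite_setOf_not_disjoint {V : Type*} {E : Set (Finset V)}
    (hfin : ∀ v : V, {e | e ∈ E ∧ v ∈ e}.Finite) (e : E) :
    {e' : E | ¬Disjoint (e : Finset V) e'}.Finite := by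
  refine ((e.1.finite_toSet.biUnion fun v _ => hfin v).preimage
    Subtype.val_injective.injOn).subset fun e' he' => ?_
  obtain ⟨v, hv, hv'⟩ := Finset.not_disjoint_iff.mp he'
  exact Set.mem_biUnion hv ⟨e'.2, hv'⟩

theorem stmt4_general {V : Type*} [Countable V] [DecidableEq V]
    (k : ℕ) (hk : 2 ≤ k) (E : Set (Finset V))
    (hfin : ∀ v : V, {e | e ∈ E ∧ v ∈ e}.Finite) :
    ∃ φ : Finset V → ℕ, Set.InjOn φ E ∧
      ¬ ∃ w : ℕ → V, Function.Injective w ∧ (∀ i, looseEdge k w i ∈ E) ∧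
        ∀ i, φ (looseEdge k w i) < φ (looseEdge k w (i + 1)) := by
  classical
  obtain ⟨φ, hφ, hpath⟩ := exists_injective_not_strictMono_of_finite_rel
    (finite_setOf_not_disjoint hfin)
  refine ⟨fun e => if he : e ∈ E then φ ⟨e, he⟩ else 0, fun e he e' he' h => ?_, ?_⟩
  · simp only [dif_pos he, dif_pos he'] at h
    exact congrArg Subtype.val (hφ h)
  · rintro ⟨w, -, hE, hlt⟩
    refine hpath (fun i => ⟨looseEdge k w i, hE i⟩)
      (fun i => looseEdge_not_disjoint_succ (by omega) w i) (strictMono_nat_of_lt_succ ?_)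
    intro i
    simpa only [Function.comp_apply, dif_pos (hE _)] using hlt i

theorem stmt4 {V : Type*} [Countable V] [Infinite V] [DecidableEq V]
    (k : ℕ) (hk : 2 ≤ k) (E : Set (Finset V)) (hunif : ∀ e ∈ E, e.card = k)
    (hfin : ∀ v : V, {e | e ∈ E ∧ v ∈ e}.Finite) :
    ∃ φ : Finset V → ℕ, Set.InjOn φ E ∧
      ¬ ∃ w : ℕ → V, Function.Injective w ∧ (∀ i, looseEdge k w i ∈ E) ∧
        ∀ i, φ (looseEdge k w i) < φ (looseEdge k w (i + 1)) :=
  stmt4_general k hk E hfin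
end

section
/- For every k ≥ 3 there exists a simple countable k-uniform hypergraph H=(V,E) that has property C_2 but contains no infinite (k−1)-branching tree. -/
/-!
Take the complete graph on the even numbers and pad each of its edges `{2m, 2n}` with `k - 2`
fresh odd vertices, private to that edge. Every even vertex lies in infinitely many edges
meeting the evens in two vertices, which gives `C_2`. In an injective tree, each non-root
vertex `x (a :: s)` lies in the two distinct edges `e_s` and `e_(a :: s)`, so it cannot be a
private vertex. But the edge at a node of depth one consists of `k ≥ 3` non-root vertices,
while every edge has only two vertices that are not private.
-/

section Tree

variable {V : Type*} [DecidableEq V] {k : ℕ} {x : List (Fin (k - 1)) → V}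

lemma mem_treeEdge_self (s : List (Fin (k - 1))) : x s ∈ treeEdge k x s :=
  Finset.mem_insert_self _ _

lemma mem_treeEdge_cons (a : Fin (k - 1)) (s : List (Fin (k - 1))) :
    x (a :: s) ∈ treeEdge k x s :=
  Finset.mem_insert_of_mem (Finset.mem_image_of_mem _ (Finset.mem_univ a))

lemma treeEdge_cons_ne (hx : Function.Injective x) (a : Fin (k - 1)) (s : List (Fin (k - 1))) :
    treeEdge k x (a :: s) ≠ treeEdge k x s := by
  intro h
  have hs : x s ∈ treeEdge k x (a :: s) := h ▸ mem_treeEdge_self s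
  simp only [treeEdge, Finset.mem_insert, Finset.mem_image, Finset.mem_univ, true_and] at hs
  rcases hs with hs | ⟨b, hb⟩
  · exact List.cons_ne_self a s (hx hs).symm
  · exact absurd (congrArg List.length (hx hb)) (by simp only [List.length_cons]; omega)

theorem not_exists_injective_tree (hk : 3 ≤ k) {E : Set (Finset V)}
    (hE : ∀ e ∈ E, {v | v ∈ e ∧ ∃ f ∈ E, f ≠ e ∧ v ∈ f}.ncard ≤ 2) :
    ¬ ∃ x : List (Fin (k - 1)) → V, Function.Injective x ∧ ∀ s, treeEdge k x s ∈ E := by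
  rintro ⟨x, hx, hxE⟩
  set a₀ : Fin (k - 1) := ⟨0, by omega⟩
  set a₁ : Fin (k - 1) := ⟨1, by omega⟩
  set e := treeEdge k x [a₀]
  have hsub : ({x [a₀], x [a₀, a₀], x [a₁, a₀]} : Set V) ⊆
      {v | v ∈ e ∧ ∃ f ∈ E, f ≠ e ∧ v ∈ f} := by
    rintro v (rfl | rfl | rfl)
    · exact ⟨mem_treeEdge_self _, _, hxE [], (treeEdge_cons_ne hx a₀ []).symm,
        mem_treeEdge_cons a₀ []⟩
    · exact ⟨mem_treeEdge_cons _ _, _, hxE _, treeEdge_cons_ne hx _ _, mem_treeEdge_self _⟩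
    · exact ⟨mem_treeEdge_cons _ _, _, hxE _, treeEdge_cons_ne hx _ _, mem_treeEdge_self _⟩
  have ha : a₀ ≠ a₁ := by simp [a₀, a₁]
  have hthree : ({x [a₀], x [a₀, a₀], x [a₁, a₀]} : Set V).ncard = 3 :=
    Set.ncard_eq_three.mpr ⟨_, _, _, hx.ne (by simp), hx.ne (by simp), hx.ne (by simp [ha]), rfl⟩
  have hle := Set.ncard_le_ncard hsub (e.finite_toSet.subset fun _ hv => hv.1)
  have := hE e (hxE _)
  omega

end Tree

section Padded

/-- The padding vertices are private to the edge because `Nat.pair` is injective. -/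
def paddedEdge (k m n : ℕ) : Finset ℕ :=
  insert (2 * m) (insert (2 * n)
    ((Finset.range (k - 2)).image fun j => 2 * Nat.pair (Nat.pair m n) j + 1))

def paddedCompleteGraph (k : ℕ) : Set (Finset ℕ) :=
  {e | ∃ m n, m < n ∧ e = paddedEdge k m n}

variable {k m n m' n' v : ℕ}

lemma mem_paddedEdge : v ∈ paddedEdge k m n ↔
    v = 2 * m ∨ v = 2 * n ∨ ∃ j < k - 2, 2 * Nat.pair (Nat.pair m n) j + 1 = v := by
  simp [paddedEdge]

lemma eq_of_odd_mem_paddedEdge (hv : Odd v) (h : v ∈ paddedEdge k m n)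
    (h' : v ∈ paddedEdge k m' n') : m = m' ∧ n = n' := by
  rw [Nat.odd_iff] at hv
  rw [mem_paddedEdge] at h h'
  rcases h with h | h | ⟨j, -, rfl⟩ <;> try omega
  rcases h' with h' | h' | ⟨j', -, hj'⟩ <;> try omega
  have hpair : Nat.pair (Nat.pair m' n') j' = Nat.pair (Nat.pair m n) j := by omega
  obtain ⟨hmn, -⟩ := Nat.pair_eq_pair.mp hpair
  obtain ⟨rfl, rfl⟩ := Nat.pair_eq_pair.mp hmn
  exact ⟨rfl, rfl⟩

lemma eq_of_even_mem_paddedEdge (hv : Even v) (h : v ∈ paddedEdge k m n) :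
    v = 2 * m ∨ v = 2 * n := by
  rw [Nat.even_iff] at hv
  rw [mem_paddedEdge] at h
  rcases h with h | h | ⟨j, -, rfl⟩ <;> omega

lemma card_paddedEdge (hk : 2 ≤ k) (hmn : m ≠ n) : (paddedEdge k m n).card = k := by
  have hinj : Function.Injective fun j => 2 * Nat.pair (Nat.pair m n) j + 1 := fun a b hab =>
    (Nat.pair_eq_pair.mp (by dsimp only at hab; omega : Nat.pair (Nat.pair m n) a = Nat.pair (Nat.pair m n) b)).2
  rw [paddedEdge, Finset.card_insert_of_notMem, Finset.card_insert_of_notMem,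
    Finset.card_image_of_injective _ hinj, Finset.card_range]
  · omega
  · simp only [Finset.mem_image, Finset.mem_range, not_exists, not_and]
    intro j _ h
    omega
  · simp only [Finset.mem_insert, Finset.mem_image, Finset.mem_range, not_or, not_exists,
      not_and]
    exact ⟨by omega, fun j _ h => by omega⟩

lemma card_of_mem_paddedCompleteGraph (hk : 2 ≤ k) {e : Finset ℕ}
    (he : e ∈ paddedCompleteGraph k) : e.card = k := by
  obtain ⟨m, n, hmn, rfl⟩ := he
  exact card_paddedEdge hk hmn.ne

lemma simpleHyper_paddedCompleteGraph : SimpleHyper (paddedCompleteGraph k) := by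
  rintro _ ⟨m, n, hmn, rfl⟩ _ ⟨m', n', hmn', rfl⟩ u v huv hue hve huf hvf
  suffices m = m' ∧ n = n' by rw [this.1, this.2]
  rcases Nat.even_or_odd u with hu | hu
  · rcases Nat.even_or_odd v with hv | hv
    · rcases eq_of_even_mem_paddedEdge hu hue with h1 | h1 <;>
      rcases eq_of_even_mem_paddedEdge hv hve with h2 | h2 <;>
      rcases eq_of_even_mem_paddedEdge hu huf with h3 | h3 <;>
      rcases eq_of_even_mem_paddedEdge hv hvf with h4 | h4 <;> omega
    · exact eq_of_odd_mem_paddedEdge hv hve hvf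
  · exact eq_of_odd_mem_paddedEdge hu hue huf

lemma propC_two_paddedCompleteGraph : PropC (paddedCompleteGraph k) 2 := by
  refine ⟨{v | Even v}, ⟨0, Even.zero⟩, ?_⟩
  rintro _ ⟨m, rfl⟩
  rw [← two_mul]
  have hmem : ∀ i, 2 * (m + 1 + i) ∈ paddedEdge k m (m + 1 + i) := fun i =>
    mem_paddedEdge.mpr (Or.inr (Or.inl rfl))
  refine Set.infinite_of_injective_forall_mem (f := fun i => paddedEdge k m (m + 1 + i))
    (fun i i' h => ?_) fun i => ⟨⟨m, m + 1 + i, by omega, rfl⟩, mem_paddedEdge.mpr (Or.inl rfl), ?_⟩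
  · replace h : paddedEdge k m (m + 1 + i) = paddedEdge k m (m + 1 + i') := h
    have := eq_of_even_mem_paddedEdge (even_two_mul _) (h ▸ hmem i)
    omega
  · have hsub : ({2 * m, 2 * (m + 1 + i)} : Set ℕ) ⊆
        (paddedEdge k m (m + 1 + i) : Set ℕ) ∩ {v | Even v} := by
      rintro w (rfl | rfl)
      · exact ⟨mem_paddedEdge.mpr (Or.inl rfl), even_two_mul _⟩
      · exact ⟨hmem i, even_two_mul _⟩
    calc 2 = ({2 * m, 2 * (m + 1 + i)} : Set ℕ).ncard := (Set.ncard_pair (by omega)).symm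
      _ ≤ _ := Set.ncard_le_ncard hsub ((paddedEdge k m _).finite_toSet.inter_of_left _)

lemma ncard_shared_le_two_of_mem_paddedCompleteGraph {e : Finset ℕ}
    (he : e ∈ paddedCompleteGraph k) :
    {v | v ∈ e ∧ ∃ f ∈ paddedCompleteGraph k, f ≠ e ∧ v ∈ f}.ncard ≤ 2 := by
  obtain ⟨m, n, -, rfl⟩ := he
  have hsub : {v | v ∈ paddedEdge k m n ∧ ∃ f ∈ paddedCompleteGraph k,
      f ≠ paddedEdge k m n ∧ v ∈ f} ⊆ {2 * m, 2 * n} := by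
    rintro v ⟨hv, _, ⟨m', n', -, rfl⟩, hne, hv'⟩
    rcases Nat.even_or_odd v with heven | hodd
    · exact eq_of_even_mem_paddedEdge heven hv
    · obtain ⟨rfl, rfl⟩ := eq_of_odd_mem_paddedEdge hodd hv hv'
      exact absurd rfl hne
  exact (Set.ncard_le_ncard hsub).trans (Set.ncard_insert_le _ _ |>.trans (by simp))

end Padded

theorem stmt5 (k : ℕ) (hk : 3 ≤ k) :
    ∃ E : Set (Finset ℕ), (∀ e ∈ E, e.card = k) ∧ SimpleHyper E ∧ PropC E 2 ∧
      ¬ ∃ x : List (Fin (k - 1)) → ℕ, Function.Injective x ∧ ∀ s, treeEdge k x s ∈ E :=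
  ⟨paddedCompleteGraph k, fun _ => card_of_mem_paddedCompleteGraph (by omega),
    simpleHyper_paddedCompleteGraph, propC_two_paddedCompleteGraph,
    not_exists_injective_tree hk fun _ => ncard_shared_le_two_of_mem_paddedCompleteGraph⟩
end

section
/- For all integers k and ℓ with 3 ≤ ℓ ≤ k there exists a countable k-uniform hypergraph H=(V,E) that has property C_{ℓ−1} but does not have property C_ℓ. -/
open Function

namespace Sunflower

variable {V : Type*} [DecidableEq V] (C : Finset V) (P : ℕ → Finset V)

def edges : Set (Finset V) :=
  Set.range fun i => C ∪ P i

variable {C P}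

lemma edge_injective (hP : Pairwise (Disjoint on P)) (hne : ∀ i, (P i).Nonempty)
    (hCP : ∀ i, Disjoint C (P i)) : Injective fun i => C ∪ P i := by
  intro i j hij
  by_contra hne_ij
  obtain ⟨x, hx⟩ := hne i
  have hxj : x ∈ C ∪ P j := Finset.subset_of_eq hij (Finset.mem_union_right C hx)
  rcases Finset.mem_union.1 hxj with hxC | hxPj
  · exact Finset.disjoint_left.1 (hCP i) hxC hx
  · exact Finset.disjoint_left.1 (hP hne_ij) hx hxPj

lemma edges_subsingleton_of_notMem (hP : Pairwise (Disjoint on P)) {v : V} (hv : v ∉ C) :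
    {e | e ∈ edges C P ∧ v ∈ e}.Subsingleton := by
  rintro _ ⟨⟨i, rfl⟩, hvi⟩ _ ⟨⟨j, rfl⟩, hvj⟩
  have hvPi : v ∈ P i := (Finset.mem_union.1 hvi).resolve_left hv
  have hvPj : v ∈ P j := (Finset.mem_union.1 hvj).resolve_left hv
  obtain rfl : i = j := by
    by_contra hij
    exact Finset.disjoint_left.1 (hP hij) hvPi hvPj
  rfl

lemma propC_card_core (hC : C.Nonempty) (hP : Pairwise (Disjoint on P))
    (hne : ∀ i, (P i).Nonempty) (hCP : ∀ i, Disjoint C (P i)) : PropC (edges C P) C.card := by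
  refine ⟨C, hC, fun v hv => ?_⟩
  refine (Set.infinite_range_of_injective (edge_injective hP hne hCP)).mono ?_
  rintro _ ⟨i, rfl⟩
  have hcore : ((C ∪ P i : Finset V) : Set V) ∩ C = C := by
    rw [Finset.coe_union, Set.union_inter_cancel_left]
  refine ⟨⟨i, rfl⟩, Finset.mem_union_left _ hv, ?_⟩
  rw [hcore, Set.ncard_coe_finset]

lemma not_propC_card_core_add_one (hP : Pairwise (Disjoint on P)) :
    ¬ PropC (edges C P) (C.card + 1) := by
  rintro ⟨V', ⟨v₀, hv₀⟩, hV'⟩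
  have hV'C : V' ⊆ C := by
    intro v hv
    by_contra hvC
    exact hV' v hv <| ((edges_subsingleton_of_notMem hP hvC).anti
      fun e he => ⟨he.1, he.2.1⟩).finite
  obtain ⟨e, -, -, hcard⟩ := (hV' v₀ hv₀).nonempty
  have : ((e : Set V) ∩ V').ncard ≤ C.card := by
    rw [← Set.ncard_coe_finset]
    exact Set.ncard_le_ncard (Set.inter_subset_right.trans hV'C)
  omega

end Sunflower

lemma pairwise_disjoint_Ico_add_mul (a b : ℕ) :
    Pairwise (Disjoint on fun i => Finset.Ico (a + b * i) (a + b * i + b)) := by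
  refine (pairwise_disjoint_on _).2 fun i j hij => Finset.disjoint_left.2 fun x hxi hxj => ?_
  have : b * (i + 1) ≤ b * j := Nat.mul_le_mul_left b hij
  simp only [Finset.mem_Ico] at hxi hxj
  rw [mul_add] at this
  omega

theorem stmt6 (k ℓ : ℕ) (hℓ : 3 ≤ ℓ) (hℓk : ℓ ≤ k) :
    ∃ E : Set (Finset ℕ), (∀ e ∈ E, e.card = k) ∧ PropC E (ℓ - 1) ∧ ¬ PropC E ℓ := by
  obtain ⟨m, rfl⟩ : ∃ m, ℓ = m + 1 := ⟨ℓ - 1, by omega⟩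
  obtain ⟨b, rfl⟩ : ∃ b, k = m + b := ⟨k - m, by omega⟩
  have hP := pairwise_disjoint_Ico_add_mul m b
  have hCP : ∀ i, Disjoint (Finset.range m) (Finset.Ico (m + b * i) (m + b * i + b)) := fun i =>
    Finset.disjoint_left.2 fun x hx hxP => by
      simp only [Finset.mem_range, Finset.mem_Ico] at hx hxP
      omega
  refine ⟨Sunflower.edges (Finset.range m) fun i => Finset.Ico (m + b * i) (m + b * i + b),
    ?_, ?_, ?_⟩
  · rintro _ ⟨i, rfl⟩
    rw [Finset.card_union_of_disjoint (hCP i), Finset.card_range, Nat.card_Ico]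
    omega
  · simpa only [Nat.add_sub_cancel, Finset.card_range] using
      Sunflower.propC_card_core (Finset.nonempty_range_iff.2 (by omega)) hP
        (fun i => Finset.nonempty_Ico.2 (by omega)) hCP
  · simpa only [Finset.card_range] using
      Sunflower.not_propC_card_core_add_one (C := Finset.range m) hP
end

section
/- For every countable graph G and every integer k ≥ 1, G has property FIN_k if and only if χ*(G) = k. -/
/-- There is an increasing path on `k` vertices in `G` under the vertex labeling `φ`. -/
def IncrPathOn {V : Type*} (G : SimpleGraph V) (φ : V → ℕ) (k : ℕ) : Prop :=
  ∃ w : ℕ → V, (∀ i j, i < k → j < k → w i = w j → i = j) ∧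
    ∀ i, i + 1 < k → G.Adj (w i) (w (i + 1)) ∧ φ (w i) < φ (w (i + 1))

/-- There is an infinite increasing path in `G` under the vertex labeling `φ`. -/
def InfIncrPath {V α : Type*} [Preorder α] (G : SimpleGraph V) (φ : V → α) : Prop :=
  ∃ w : ℕ → V, Function.Injective w ∧ ∀ i, G.Adj (w i) (w (i + 1)) ∧ φ (w i) < φ (w (i + 1))

/-- `V(G)` can be partitioned into `k` independent sets `V_1, …, V_k` such that every vertex
of `V_j` has only finitely many neighbours in `V_1 ∪ ⋯ ∪ V_{j-1}`. -/
def HasChiStarPartition {V : Type*} (G : SimpleGraph V) (k : ℕ) : Prop :=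
  ∃ P : V → Fin k, (∀ u v, G.Adj u v → P u ≠ P v) ∧
    ∀ v, {u | G.Adj v u ∧ (P u : ℕ) < (P v : ℕ)}.Finite

/-- Property `FIN_k`: every bijective labeling of `V` by `ℕ` yields an increasing path on `k`
vertices, but some bijective labeling yields no increasing path on `k + 1` vertices. -/
def FINk {V : Type*} (G : SimpleGraph V) (k : ℕ) : Prop :=
  (∀ φ : V ≃ ℕ, IncrPathOn G (fun v => φ v) k) ∧
  (∃ φ : V ≃ ℕ, ¬ IncrPathOn G (fun v => φ v) (k + 1))

/-!
Given a labelling without increasing paths on `k + 1` vertices, colour each vertex by the number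
of vertices of a longest increasing path ending there, minus one. Adjacent vertices get different
colours, and a neighbour of lower colour must carry a smaller label, so there are only finitely
many; this is a χ*-partition into `k` classes.

Conversely, given a χ*-partition into `k` classes, enumerate the vertices in an order of type `ω`
in which every vertex comes after its finitely many neighbours in lower classes. Along an
increasing path the class then strictly increases, so such a path has at most `k` vertices.
-/

open Function

namespace WellFounded

variable {V : Type*} {r : V → V → Prop}

/-- The least function `≥ b` that increases strictly along `r`, provided every element has only
finitely many `r`-predecessors (otherwise the `iSup` may be the junk value `0`). -/
noncomputable def natRank (hwf : WellFounded r) (b : V → ℕ) : V → ℕ :=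
  hwf.fix fun v rank => max (b v) (⨆ u : {u // r u v}, rank u u.2 + 1)

variable (hwf : WellFounded r) (b : V → ℕ)

theorem natRank_eq (v : V) :
    hwf.natRank b v = max (b v) (⨆ u : {u // r u v}, hwf.natRank b u + 1) :=
  hwf.fix_eq _ v

theorem le_natRank (v : V) : b v ≤ hwf.natRank b v := by
  rw [natRank_eq]
  exact le_max_left _ _

variable {b}

theorem natRank_lt {u v : V} (hfin : {u | r u v}.Finite) (huv : r u v) :
    hwf.natRank b u < hwf.natRank b v := by
  have : Finite {u // r u v} := hfin.to_subtype
  rw [natRank_eq hwf b v]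
  exact Nat.lt_of_succ_le <| le_max_of_le_right <|
    le_ciSup (f := fun u : {u // r u v} => hwf.natRank b u + 1) (Set.finite_range _).bddAbove
      ⟨u, huv⟩

theorem natRank_eq_or_exists {v : V} (hfin : {u | r u v}.Finite) :
    hwf.natRank b v = b v ∨ ∃ u, r u v ∧ hwf.natRank b v = hwf.natRank b u + 1 := by
  have : Finite {u // r u v} := hfin.to_subtype
  rw [natRank_eq hwf b v]
  rcases isEmpty_or_nonempty {u // r u v} with _ | _
  · left
    simp [ciSup_of_empty]
  · obtain ⟨⟨u, huv⟩, hu⟩ := exists_eq_ciSup_of_finite (f := fun u : {u // r u v} =>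
      hwf.natRank b u + 1)
    rw [← hu]
    rcases max_choice (b v) (hwf.natRank b u + 1) with h | h
    · exact .inl h
    · exact .inr ⟨u, huv, h⟩

theorem exists_chain_natRank_zero (hfin : ∀ v, {u | r u v}.Finite) (v : V) :
    ∃ w : ℕ → V, w (hwf.natRank 0 v) = v ∧ ∀ i < hwf.natRank 0 v, r (w i) (w (i + 1)) := by
  induction v using hwf.induction with
  | _ v ih =>
    rcases hwf.natRank_eq_or_exists (b := 0) (hfin v) with h | ⟨u, huv, h⟩
    · exact ⟨fun _ => v, rfl, fun i hi => by simp [h] at hi⟩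
    · obtain ⟨w, hwu, hw⟩ := ih u huv
      refine ⟨fun i => if i ≤ hwf.natRank 0 u then w i else v, by simp [h], fun i hi => ?_⟩
      rcases Nat.lt_or_ge i (hwf.natRank 0 u) with hi' | hi'
      · simpa [hi'.le, Nat.succ_le_of_lt hi'] using hw i hi'
      · obtain rfl : i = hwf.natRank 0 u := by omega
        simpa [hwu] using huv

end WellFounded

theorem exists_equiv_nat_lt_of_injective {V : Type*} [Infinite V] {f : V → ℕ}
    (hf : Injective f) : ∃ φ : V ≃ ℕ, ∀ ⦃u v⦄, f u < f v → φ u < φ v := by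
  have : Infinite (Set.range f) := (Set.infinite_range_of_injective hf).to_subtype
  refine ⟨(Equiv.ofInjective f hf).trans (Nat.Subtype.orderIsoOfNat _).symm.toEquiv,
    fun u v huv => ?_⟩
  exact (Nat.Subtype.orderIsoOfNat (Set.range f)).symm.strictMono
    (show (⟨f u, u, rfl⟩ : Set.range f) < ⟨f v, v, rfl⟩ from huv)

theorem exists_equiv_nat_lt_of_wellFounded {V : Type*} [Countable V] [Infinite V]
    {r : V → V → Prop} (hwf : WellFounded r) (hfin : ∀ v, {u | r u v}.Finite) :
    ∃ φ : V ≃ ℕ, ∀ ⦃u v⦄, r u v → φ u < φ v := by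
  obtain ⟨e, he⟩ := Countable.exists_injective_nat V
  set N := hwf.natRank e
  -- `e ≤ N` makes `Nat.pair (N v) (e v)` increase with `N`, since `N u < N v` puts the two
  -- codes in the disjoint ranges `[N u ^ 2, (N u + 1) ^ 2)` and `[N v ^ 2, (N v + 1) ^ 2)`.
  have hcode_lt : ∀ ⦃u v⦄, r u v → Nat.pair (N u) (e u) < Nat.pair (N v) (e v) := by
    intro u v huv
    have hNu : max (N u) (e u) = N u := max_eq_left (hwf.le_natRank e u)
    have hNv : max (N v) (e v) = N v := max_eq_left (hwf.le_natRank e v)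
    calc Nat.pair (N u) (e u)
      _ < (N u + 1) ^ 2 := by simpa [hNu] using Nat.pair_lt_max_add_one_sq (N u) (e u)
      _ ≤ N v ^ 2 := Nat.pow_le_pow_left (hwf.natRank_lt (hfin v) huv) 2
      _ ≤ Nat.pair (N v) (e v) := by
        simpa [hNv] using le_of_add_le_left (Nat.max_sq_add_min_le_pair (N v) (e v))
  have hcode_inj : Injective fun v => Nat.pair (N v) (e v) :=
    fun u v h => he (Nat.pair_eq_pair.mp h).2
  obtain ⟨φ, hφ⟩ := exists_equiv_nat_lt_of_injective hcode_inj
  exact ⟨φ, fun u v huv => hφ (hcode_lt huv)⟩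

theorem IncrPathOn.mono {V : Type*} {G : SimpleGraph V} {φ : V → ℕ} {j k : ℕ} (hjk : j ≤ k)
    (h : IncrPathOn G φ k) : IncrPathOn G φ j := by
  obtain ⟨w, hinj, hstep⟩ := h
  exact ⟨w, fun a b ha hb => hinj a b (ha.trans_le hjk) (hb.trans_le hjk),
    fun i hi => hstep i (hi.trans_le hjk)⟩

namespace SimpleGraph

variable {V : Type*} (G : SimpleGraph V)

theorem incrPathOn_zero [Nonempty V] (φ : V → ℕ) : IncrPathOn G φ 0 :=
  ⟨fun _ => Classical.arbitrary V, fun _ _ hi => absurd hi (Nat.not_lt_zero _),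
    fun _ hi => absurd hi (Nat.not_lt_zero _)⟩

/-- Increasing labels already make the vertices of a walk pairwise distinct. -/
theorem incrPathOn_of_forall {φ : V → ℕ} {k : ℕ} (w : ℕ → V)
    (hstep : ∀ i, i + 1 < k → G.Adj (w i) (w (i + 1)) ∧ φ (w i) < φ (w (i + 1))) :
    IncrPathOn G φ k := by
  have hmono : StrictMonoOn (φ ∘ w) (Set.Iio k) :=
    strictMonoOn_of_lt_add_one Set.ordConnected_Iio fun i _ _ hi => (hstep i hi).2
  exact ⟨w, fun i j hi hj hij => hmono.injOn hi hj (congrArg φ hij), hstep⟩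

section LongestPath

variable (φ : V ≃ ℕ)

def IncrEdge (u v : V) : Prop := G.Adj u v ∧ φ u < φ v

theorem wellFounded_incrEdge : WellFounded (G.IncrEdge φ) :=
  Subrelation.wf (fun h => h.2) (InvImage.wf φ wellFounded_lt)

theorem finite_incrEdge (v : V) : {u | G.IncrEdge φ u v}.Finite :=
  (Set.finite_Iio (φ v)).preimage φ.injective.injOn |>.subset fun _ hu => hu.2

/-- `longestPath G φ v + 1` is the number of vertices of a longest increasing path ending at
`v`. -/
noncomputable def longestPath (v : V) : ℕ := (G.wellFounded_incrEdge φ).natRank 0 v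

theorem longestPath_lt {u v : V} (huv : G.IncrEdge φ u v) :
    G.longestPath φ u < G.longestPath φ v :=
  (G.wellFounded_incrEdge φ).natRank_lt (G.finite_incrEdge φ v) huv

theorem incrPathOn_longestPath_add_one (v : V) :
    IncrPathOn G (fun v => φ v) (G.longestPath φ v + 1) := by
  obtain ⟨w, -, hw⟩ := (G.wellFounded_incrEdge φ).exists_chain_natRank_zero
    (G.finite_incrEdge φ) v
  exact G.incrPathOn_of_forall w fun i hi => hw i (Nat.lt_of_succ_lt_succ hi)

theorem hasChiStarPartition_of_not_incrPathOn {K : ℕ}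
    (h : ¬ IncrPathOn G (fun v => φ v) (K + 1)) : HasChiStarPartition G K := by
  have hlt (v : V) : G.longestPath φ v < K := by
    by_contra! hK
    exact h ((G.incrPathOn_longestPath_add_one φ v).mono (Nat.succ_le_succ hK))
  have hcmp {u v : V} (huv : G.Adj u v) (hle : G.longestPath φ u ≤ G.longestPath φ v) :
      G.IncrEdge φ u v := by
    refine ⟨huv, lt_of_le_of_ne ?_ (φ.injective.ne huv.ne)⟩
    by_contra! hvu
    exact (G.longestPath_lt φ ⟨huv.symm, hvu⟩).not_ge hle
  refine ⟨fun v => ⟨G.longestPath φ v, hlt v⟩, fun u v huv heq => ?_, fun v => ?_⟩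
  · have heq : G.longestPath φ u = G.longestPath φ v := congrArg Fin.val heq
    exact (G.longestPath_lt φ (hcmp huv heq.le)).ne heq
  · exact (G.finite_incrEdge φ v).subset fun u ⟨hvu, hlt⟩ => hcmp hvu.symm (le_of_lt hlt)

end LongestPath

theorem exists_not_incrPathOn_of_hasChiStarPartition [Countable V] [Infinite V] {k : ℕ}
    (hP : HasChiStarPartition G k) : ∃ φ : V ≃ ℕ, ¬ IncrPathOn G (fun v => φ v) (k + 1) := by
  obtain ⟨P, hproper, hfin⟩ := hP
  obtain ⟨φ, hφ⟩ := exists_equiv_nat_lt_of_wellFounded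
    (r := fun u v => G.Adj v u ∧ (P u : ℕ) < P v)
    (Subrelation.wf (fun h => h.2) (InvImage.wf (fun v => (P v : ℕ)) wellFounded_lt)) hfin
  refine ⟨φ, ?_⟩
  rintro ⟨w, -, hstep⟩
  have hclass (i : ℕ) (hi : i < k) : (P (w i) : ℕ) < P (w (i + 1)) := by
    obtain ⟨hadj, hφw⟩ := hstep i (by omega)
    refine lt_of_le_of_ne ?_ (Fin.val_ne_of_ne (hproper _ _ hadj))
    by_contra! hdown
    exact (hφ ⟨hadj, hdown⟩).not_gt hφw
  have hle (i : ℕ) (hi : i ≤ k) : i ≤ P (w i) := by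
    induction i with
    | zero => exact Nat.zero_le _
    | succ i ih => exact (ih (by omega)).trans_lt (hclass i hi)
  exact (hle k le_rfl).not_gt (P (w k)).isLt

end SimpleGraph

theorem stmt7_general {V : Type*} [Countable V] [Infinite V] (G : SimpleGraph V)
    (k : ℕ) :
    FINk G k ↔ (HasChiStarPartition G k ∧ ∀ j < k, ¬ HasChiStarPartition G j) := by
  constructor
  · rintro ⟨hpath, φ, hφ⟩
    refine ⟨G.hasChiStarPartition_of_not_incrPathOn φ hφ, fun j hj hPj => ?_⟩
    obtain ⟨ψ, hψ⟩ := G.exists_not_incrPathOn_of_hasChiStarPartition hPj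
    exact hψ ((hpath ψ).mono hj)
  · rintro ⟨hPk, hmin⟩
    refine ⟨fun φ => ?_, G.exists_not_incrPathOn_of_hasChiStarPartition hPk⟩
    cases k with
    | zero => exact G.incrPathOn_zero _
    | succ j =>
      by_contra h
      exact hmin j j.lt_succ_self (G.hasChiStarPartition_of_not_incrPathOn φ h)

theorem stmt7 {V : Type*} [Countable V] [Infinite V] (G : SimpleGraph V)
    (k : ℕ) (hk : 1 ≤ k) :
    FINk G k ↔ (HasChiStarPartition G k ∧ ∀ j < k, ¬ HasChiStarPartition G j) :=
  stmt7_general G k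
end

section
/- There exists a countable bipartite graph H (i.e., a countable graph whose vertex set can be partitioned into two independent sets) that has property FIN. -/
/-- Property `FIN`: every bijective labeling of `V` by `ℕ` yields increasing paths on any
number of vertices, but some bijective labeling yields no infinite increasing path. -/
def FIN {V : Type*} (G : SimpleGraph V) : Prop :=
  (∀ φ : V ≃ ℕ, ∀ k : ℕ, IncrPathOn G (fun v => φ v) k) ∧
  (∃ φ : V ≃ ℕ, ¬ InfIncrPath G (fun v => φ v))

/-!
Take, for every `k`, a rooted tree of depth `k - 1` in which every vertex above the bottom
level has infinitely many children, and let `G` be the disjoint union of these trees; the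
parity of the level is a bipartition. Under any labeling, starting at the root of the `k`-th
tree and repeatedly moving to a child with a larger label (one exists, as there are infinitely
many children) gives an increasing path on `k` vertices. On the other hand an injective walk in
a rooted tree never steps to a child and then on to a parent, since the parent is unique and
the walk would return to where it was. So such a walk moves towards the root for a while and then
away from it for ever, which is impossible in a tree of finite depth: `G` has no ray at all.
-/

theorem exists_seq_lt_of_infinite_succ {α : Type*} {r : α → α → Prop}
    (hr : ∀ x, {y | r x y}.Infinite) {φ : α → ℕ} (hφ : Function.Injective φ) (x : α) :
    ∃ s : ℕ → α, s 0 = x ∧ ∀ i, r (s i) (s (i + 1)) ∧ φ (s i) < φ (s (i + 1)) := by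
  have hnext : ∀ x, ∃ y, r x y ∧ φ x < φ y := fun x => by
    obtain ⟨_, ⟨y, hy, rfl⟩, hlt⟩ := ((hr x).image hφ.injOn).exists_gt (φ x)
    exact ⟨y, hy, hlt⟩
  choose f hf using hnext
  exact ⟨fun n => f^[n] x, rfl, fun i => by simpa only [Function.iterate_succ_apply'] using hf _⟩

theorem Nat.not_bddAbove_range_of_no_peak {h : ℕ → ℕ}
    (hstep : ∀ i, h (i + 1) = h i + 1 ∨ h i = h (i + 1) + 1)
    (hpeak : ∀ i, h (i + 1) = h i + 1 → h (i + 2) = h (i + 1) + 1) :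
    ¬ BddAbove (Set.range h) := by
  rintro ⟨K, hK⟩
  have hle : ∀ i, h i ≤ K := fun i => hK ⟨i, rfl⟩
  by_cases hup : ∃ i, h (i + 1) = h i + 1
  · obtain ⟨i, hi⟩ := hup
    have hrising : ∀ j, h (i + j + 1) = h (i + j) + 1 := by
      intro j
      induction j with
      | zero => exact hi
      | succ j ih => exact hpeak _ ih
    have hgrowth : ∀ j, j ≤ h (i + j) := by
      intro j
      induction j with
      | zero => exact Nat.zero_le _
      | succ j ih => rw [← add_assoc, hrising j]; omega
    have := hle (i + (K + 1))
    have := hgrowth (K + 1)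
    omega
  · push Not at hup
    have hfalling : ∀ j, h j + j = h 0 := by
      intro j
      induction j with
      | zero => rfl
      | succ j ih => have := (hstep j).resolve_left (hup j); omega
    have := hfalling (h 0 + 1)
    omega

theorem SimpleGraph.not_bddAbove_height_along_ray {V : Type*} {G : SimpleGraph V}
    {parent : V → V} {height : V → ℕ}
    (hG : ∀ u v, G.Adj u v →
      u = parent v ∧ height v = height u + 1 ∨ v = parent u ∧ height u = height v + 1)
    {w : ℕ → V} (hw : Function.Injective w) (hadj : ∀ i, G.Adj (w i) (w (i + 1))) :
    ¬ BddAbove (Set.range (height ∘ w)) := by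
  apply Nat.not_bddAbove_range_of_no_peak
  · intro i
    rcases hG _ _ (hadj i) with ⟨-, h⟩ | ⟨-, h⟩
    · exact Or.inl h
    · exact Or.inr h
  · intro i hup
    have hdown : w i = parent (w (i + 1)) := by
      rcases hG _ _ (hadj i) with ⟨h, -⟩ | ⟨-, h⟩
      · exact h
      · simp only [Function.comp_apply] at hup; omega
    rcases hG _ _ (hadj (i + 1)) with ⟨-, h⟩ | ⟨h, -⟩
    · exact h
    · exact absurd (hw (h.trans hdown.symm)) (by omega)

theorem IncrPathOn.comap_equiv {V W : Type*} {H : SimpleGraph W} {φ : V → ℕ} {k : ℕ}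
    (e : V ≃ W) (h : IncrPathOn H (φ ∘ e.symm) k) : IncrPathOn (H.comap e) φ k := by
  obtain ⟨w, hinj, hadj⟩ := h
  refine ⟨e.symm ∘ w, fun i j hi hj hij => hinj i j hi hj (e.symm.injective hij), fun i hi => ?_⟩
  simpa using hadj i hi

namespace DepthForest

/-- `(k, l)` is the vertex of the `k`-th tree reached from its root `(k, [])` by choosing the
children in `l.reverse`; vertices with `k ≤ l.length` are isolated. -/
def graph : SimpleGraph (ℕ × List ℕ) :=
  SimpleGraph.fromRel fun u v => ∃ a, v = (u.1, a :: u.2) ∧ u.2.length + 1 < u.1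

theorem adj_parent {u v : ℕ × List ℕ} (h : graph.Adj u v) :
    u = (v.1, v.2.tail) ∧ v.2.length = u.2.length + 1 ∨
      v = (u.1, u.2.tail) ∧ u.2.length = v.2.length + 1 := by
  rcases h.2 with ⟨a, rfl, -⟩ | ⟨a, rfl, -⟩
  · exact Or.inl ⟨rfl, rfl⟩
  · exact Or.inr ⟨rfl, rfl⟩

theorem adj_fst {u v : ℕ × List ℕ} (h : graph.Adj u v) : v.1 = u.1 ∧ u.2.length < u.1 := by
  rcases h.2 with ⟨a, rfl, hlt⟩ | ⟨a, rfl, hlt⟩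
  · exact ⟨rfl, by omega⟩
  · exact ⟨rfl, by simpa using hlt⟩

theorem even_length_iff_not {u v : ℕ × List ℕ} (h : graph.Adj u v) :
    Even u.2.length ↔ ¬ Even v.2.length := by
  rcases adj_parent h with ⟨-, h⟩ | ⟨-, h⟩ <;> simp [h, Nat.even_add_one]

theorem not_ray {w : ℕ → ℕ × List ℕ} (hw : Function.Injective w) :
    ¬ ∀ i, graph.Adj (w i) (w (i + 1)) := by
  intro hadj
  have hfst : ∀ i, (w i).1 = (w 0).1 := by
    intro i
    induction i with
    | zero => rfl
    | succ i ih => rw [(adj_fst (hadj i)).1, ih]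
  refine SimpleGraph.not_bddAbove_height_along_ray (fun _ _ => adj_parent) hw hadj
    ⟨(w 0).1, ?_⟩
  rintro _ ⟨i, rfl⟩
  exact (hfst i ▸ adj_fst (hadj i)).2.le

theorem incrPathOn (φ : ℕ × List ℕ → ℕ) (hφ : Function.Injective φ) (k : ℕ) :
    IncrPathOn graph φ k := by
  have hchildren : ∀ u : ℕ × List ℕ, {v | ∃ a, v = (u.1, a :: u.2)}.Infinite := fun u =>
    Set.infinite_of_injective_forall_mem (f := fun a => (u.1, a :: u.2))
      (fun a b hab => by simpa using hab) fun a => ⟨a, rfl⟩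
  obtain ⟨s, hs0, hs⟩ := exists_seq_lt_of_infinite_succ hchildren hφ (k, [])
  have hlevel : ∀ i, s i = (k, (s i).2) ∧ (s i).2.length = i := by
    intro i
    induction i with
    | zero => simp [hs0]
    | succ i ih =>
      obtain ⟨a, ha⟩ := (hs i).1
      rw [ha, ih.1]
      simpa using ih.2
  have hmono : StrictMono (φ ∘ s) := strictMono_nat_of_lt_succ fun i => (hs i).2
  refine ⟨s, fun i j _ _ hij => hmono.injective (congrArg φ hij), fun i hi => ⟨?_, (hs i).2⟩⟩
  obtain ⟨a, ha⟩ := (hs i).1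
  refine ⟨fun h => (hs i).2.ne (congrArg φ h), Or.inl ⟨a, ha, ?_⟩⟩
  rw [(hlevel i).2, (hlevel i).1]
  exact hi

end DepthForest

theorem stmt9 :
    ∃ G : SimpleGraph ℕ,
      (∃ A : Set ℕ, ∀ u v : ℕ, G.Adj u v → ((u ∈ A ∧ v ∉ A) ∨ (u ∉ A ∧ v ∈ A))) ∧
      FIN G := by
  let e : ℕ ≃ ℕ × List ℕ := (Denumerable.eqv _).symm
  refine ⟨DepthForest.graph.comap e, ⟨{n | Even (e n).2.length}, fun u v h => ?_⟩,
    fun φ k => ?_, ⟨Equiv.refl ℕ, ?_⟩⟩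
  · have := DepthForest.even_length_iff_not h
    simp only [Set.mem_ofPred_eq]
    tauto
  · exact .comap_equiv e (DepthForest.incrPathOn _ (φ.injective.comp e.symm.injective) k)
  · rintro ⟨w, hw, hadj⟩
    exact DepthForest.not_ray (e.injective.comp hw) fun i => (hadj i).1
end

section
/- For a countable graph G=(V,E) the following are equivalent: (1) for every subset V_1 ⊆ V such that both V_1 and V∖V_1 are infinite, there exists a nonempty W_1 ⊆ V_1 such that every v ∈ W_1 has infinitely many neighbors in W_1; (2) for every bijection φ: V → ℤ there exists an infinite increasing path in G. -/
open Set Function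

theorem InfIncrPath.of_forall_exists_adj_lt {V α : Type*} [Preorder α] {G : SimpleGraph V}
    {φ : V → α} {W : Set V} (hW : W.Nonempty) (h : ∀ v ∈ W, ∃ u ∈ W, G.Adj v u ∧ φ v < φ u) :
    InfIncrPath G φ := by
  choose f hfW hf using h
  let next : W → W := fun v => ⟨f v v.2, hfW v v.2⟩
  let w : ℕ → V := fun n => (next^[n] ⟨hW.some, hW.some_mem⟩ : V)
  have hstep : ∀ n, G.Adj (w n) (w (n + 1)) ∧ φ (w n) < φ (w (n + 1)) := fun n => by
    simp only [w, iterate_succ_apply']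
    exact hf _ _
  exact ⟨w, (strictMono_nat_of_lt_succ fun n => (hstep n).2).injective.of_comp, hstep⟩

theorem Set.Infinite.exists_lt_of_forall_le {V α : Type*} [LinearOrder α] [LocallyFiniteOrder α]
    {φ : V → α} (hφ : Injective φ) {S : Set V} (hS : S.Infinite) {a : α}
    (ha : ∀ v ∈ S, a ≤ φ v) (b : α) : ∃ u ∈ S, b < φ u := by
  by_contra! hb
  exact hS (((finite_Icc a b).preimage hφ.injOn).subset fun u hu => ⟨ha u hu, hb u hu⟩)

theorem infIncrPath_of_forall_infinite_adj {V α : Type*} [LinearOrder α] [LocallyFiniteOrder α]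
    {G : SimpleGraph V} {φ : V → α} (hφ : Injective φ) {W : Set V} {a : α}
    (ha : ∀ v ∈ W, a ≤ φ v) (hW : W.Nonempty)
    (hdeg : ∀ v ∈ W, {u | u ∈ W ∧ G.Adj v u}.Infinite) : InfIncrPath G φ :=
  .of_forall_exists_adj_lt hW fun v hv => by
    obtain ⟨u, ⟨huW, hvu⟩, hlt⟩ :=
      (hdeg v hv).exists_lt_of_forall_le hφ (fun u hu => ha u hu.1) (φ v)
    exact ⟨u, huW, hvu, hlt⟩

theorem InfIncrPath.exists_adj_le {V α : Type*} [LinearOrder α] [SuccOrder α] [IsSuccArchimedean α]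
    {G : SimpleGraph V} {φ : V → α} (h : InfIncrPath G φ) (a : α) :
    ∃ u v, G.Adj u v ∧ a ≤ φ u ∧ a ≤ φ v := by
  obtain ⟨w, -, hw⟩ := h
  have hmono : StrictMono (φ ∘ w) := strictMono_nat_of_lt_succ fun n => (hw n).2
  obtain ⟨_, ⟨n, rfl⟩, hn⟩ := not_bddAbove_iff.1 hmono.not_bddAbove_range_of_isSuccArchimedean a
  exact ⟨w n, w (n + 1), (hw n).1, hn.le, hn.le.trans (hw n).2.le⟩

theorem SimpleGraph.exists_infinite_isIndepSet_subset {V : Type*} (G : SimpleGraph V) {S : Set V}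
    (hS : S.Infinite) (h : ∀ W ⊆ S, W.Infinite → ∃ v ∈ W, {u | u ∈ W ∧ G.Adj v u}.Finite) :
    ∃ Y ⊆ S, Y.Infinite ∧ G.IsIndepSet Y := by
  let T := {W : Set V // W ⊆ S ∧ W.Infinite}
  choose pick hpick hfin using fun W : T => h W.1 W.2.1 W.2.2
  let next : T → T := fun W => ⟨W.1 \ insert (pick W) {u | u ∈ W.1 ∧ G.Adj (pick W) u},
    sdiff_subset.trans W.2.1, W.2.2.sdiff ((hfin W).insert _)⟩
  let R : ℕ → T := fun n => next^[n] ⟨S, subset_rfl, hS⟩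
  have hR : ∀ n, R (n + 1) = next (R n) := fun n => iterate_succ_apply' ..
  have hanti : Antitone fun n => (R n).1 := antitone_nat_of_succ_le fun n => by
    rw [hR]
    exact sdiff_subset
  let y : ℕ → V := fun n => pick (R n)
  have hy : Pairwise fun m n => Gᶜ.Adj (y m) (y n) := pairwise_iff_lt.2 fun m n hmn => by
    have hyn : y n ∈ (R (m + 1)).1 := hanti hmn (hpick (R n))
    rw [hR] at hyn
    obtain ⟨hyn, hnot⟩ := hyn
    rw [mem_insert_iff, not_or] at hnot
    exact ⟨Ne.symm hnot.1, fun hadj => hnot.2 ⟨hyn, hadj⟩⟩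
  refine ⟨range y, ?_, infinite_range_of_injective ?_, ?_⟩
  · rintro _ ⟨n, rfl⟩
    exact (R n).2.1 (hpick _)
  · exact injective_iff_pairwise_ne.2 (hy.mono fun _ _ h => h.ne)
  · rintro _ ⟨m, rfl⟩ _ ⟨n, rfl⟩ hne
    exact (hy (ne_of_apply_ne y hne)).2

theorem exists_equiv_int_nonneg_iff_mem {V : Type*} [Countable V] {Y : Set V} (hY : Y.Infinite)
    (hYc : Yᶜ.Infinite) : ∃ φ : V ≃ ℤ, ∀ v, 0 ≤ φ v ↔ v ∈ Y := by
  classical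
  have := hY.to_subtype
  have := hYc.to_subtype
  have := (Ici_infinite (0 : ℤ)).to_subtype
  have := (compl_Ici (a := (0 : ℤ)) ▸ Iio_infinite 0 : (Ici (0 : ℤ))ᶜ.Infinite).to_subtype
  obtain ⟨e₁⟩ := nonempty_equiv_of_countable (α := Y) (β := Ici (0 : ℤ))
  obtain ⟨e₂⟩ := nonempty_equiv_of_countable (α := ↥Yᶜ) (β := ↥(Ici (0 : ℤ))ᶜ)
  refine ⟨(Equiv.Set.sumCompl Y).symm.trans ((e₁.sumCongr e₂).trans (Equiv.Set.sumCompl _)),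
    fun v => ?_⟩
  by_cases hv : v ∈ Y
  · simp only [Equiv.trans_apply, Equiv.Set.sumCompl_symm_apply_of_mem hv, Equiv.sumCongr_apply,
      Sum.map_inl, Equiv.Set.sumCompl_apply_inl, hv, iff_true]
    exact (e₁ ⟨v, hv⟩).2
  · simp only [Equiv.trans_apply, Equiv.Set.sumCompl_symm_apply_of_notMem hv, Equiv.sumCongr_apply,
      Sum.map_inr, Equiv.Set.sumCompl_apply_inr, hv, iff_false]
    exact (e₂ ⟨v, hv⟩).2

theorem stmt10_general {V : Type*} [Countable V] (G : SimpleGraph V) :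
    (∀ V₁ : Set V, V₁.Infinite → V₁ᶜ.Infinite →
      ∃ W₁ ⊆ V₁, W₁.Nonempty ∧ ∀ v ∈ W₁, {u | u ∈ W₁ ∧ G.Adj v u}.Infinite) ↔
    (∀ φ : V ≃ ℤ, InfIncrPath G (fun v => φ v)) := by
  constructor
  · intro h φ
    have hpos : (φ ⁻¹' Ici 0).Infinite := (Ici_infinite 0).preimage (by simp)
    have hneg : (φ ⁻¹' Ici 0)ᶜ.Infinite := by
      rw [← preimage_compl, compl_Ici]
      exact (Iio_infinite 0).preimage (by simp)
    obtain ⟨W, hWpos, hW, hdeg⟩ := h _ hpos hneg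
    exact infIncrPath_of_forall_infinite_adj φ.injective (fun v hv => hWpos hv) hW hdeg
  · intro h V₁ hV₁ hV₁c
    by_contra! hV₁sparse
    obtain ⟨Y, hYV₁, hY, hYind⟩ := G.exists_infinite_isIndepSet_subset hV₁ fun W hWV₁ hW => by
      simpa using hV₁sparse W hWV₁ hW.nonempty
    obtain ⟨φ, hφ⟩ := exists_equiv_int_nonneg_iff_mem hY (hV₁c.mono (compl_subset_compl.2 hYV₁))
    obtain ⟨u, v, huv, hu, hv⟩ := (h φ).exists_adj_le 0
    exact hYind ((hφ u).1 hu) ((hφ v).1 hv) huv.ne huv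

theorem stmt10 {V : Type*} [Countable V] [Infinite V] (G : SimpleGraph V) :
    (∀ V₁ : Set V, V₁.Infinite → V₁ᶜ.Infinite →
      ∃ W₁ ⊆ V₁, W₁.Nonempty ∧ ∀ v ∈ W₁, {u | u ∈ W₁ ∧ G.Adj v u}.Infinite) ↔
    (∀ φ : V ≃ ℤ, InfIncrPath G (fun v => φ v)) :=
  stmt10_general G
end

section
/- For a countable directed graph D=(V,E) the following are equivalent: (1) for every subset V_1 ⊆ V such that both V_1 and V∖V_1 are infinite, there exists a nonempty W_1 ⊆ V_1 such that every v ∈ W_1 has infinite out-degree in W_1; (2) for every bijection φ: V → ℤ there exists an infinite increasing directed path in D. -/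
/-!
If `W ⊆ φ⁻¹[0, ∞)` is nonempty and every vertex of `W` has infinitely many out-neighbours in `W`,
then from any vertex of `W` one can step inside `W` to a larger label, since only finitely many
vertices of `W` have labels in `[0, φ v]`; iterating gives an increasing path.

Conversely, if `V₁` contains no such `W`, the set `Y` of vertices of `V₁` with finitely many
out-neighbours in `V₁` is infinite, and the digraph induced on `Y` is locally finite. Cover `Y` by
finite breadth-first layers, so that an edge climbs at most one layer, and label `Y` by `ℕ` listing
the layers in the order `1, 0, 3, 2, 5, 4, …`, and `V ∖ Y` by the negative integers. An increasing
path eventually lies in `Y`; there it can climb only from an odd layer to the next even one, after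
which it is trapped in a single finite layer, which is impossible for an injective path.
-/

open Set Function

section Layers

variable {α : Type*} (r : α → α → Prop)

def bfsLayer (i : α → ℕ) : ℕ → Set α
  | 0 => ∅
  | n + 1 => bfsLayer i n ∪ (⋃ a ∈ bfsLayer i n, {b | r a b}) ∪ {a | i a = n}

variable {r}

lemma bfsLayer_finite {i : α → ℕ} (hi : Injective i) (hr : ∀ a, {b | r a b}.Finite) (n : ℕ) :
    (bfsLayer r i n).Finite := by
  induction n with
  | zero => exact finite_empty
  | succ n ih =>
    exact (ih.union (ih.biUnion fun a _ => hr a)).union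
      ((finite_singleton n).preimage hi.injOn)

lemma bfsLayer_mono (i : α → ℕ) : Monotone (bfsLayer r i) :=
  monotone_nat_of_le_succ fun _ => subset_union_left.trans subset_union_left

lemma exists_layering_of_finite_out [Countable α] (hr : ∀ a, {b | r a b}.Finite) :
    ∃ β : α → ℕ, (∀ n, {a | β a ≤ n}.Finite) ∧ ∀ a b, r a b → β b ≤ β a + 1 := by
  classical
  obtain ⟨i, hi⟩ := exists_injective_nat α
  have hmem : ∀ a, ∃ n, a ∈ bfsLayer r i n := fun a => ⟨i a + 1, Or.inr rfl⟩
  refine ⟨fun a => Nat.find (hmem a), fun n => ?_, fun a b hab => ?_⟩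
  · exact (bfsLayer_finite hi hr n).subset fun a ha => bfsLayer_mono i ha (Nat.find_spec (hmem a))
  · exact Nat.find_min' _ (Or.inl (Or.inr (mem_biUnion (Nat.find_spec (hmem a)) hab)))

end Layers

def swapEvenOdd (n : ℕ) : ℕ := if Even n then n + 1 else n - 1

lemma le_swapEvenOdd_add_one (n : ℕ) : n ≤ swapEvenOdd n + 1 := by
  unfold swapEvenOdd; split_ifs <;> omega

lemma eq_or_odd_even_of_swapEvenOdd_le {a b : ℕ} (hab : swapEvenOdd a ≤ swapEvenOdd b)
    (hb : b ≤ a + 1) : b = a ∨ Odd a ∧ Even b := by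
  simp only [swapEvenOdd, Nat.even_iff, Nat.odd_iff] at *
  split_ifs at hab <;> omega

lemma exists_forall_eq_of_swapEvenOdd_monotone {b : ℕ → ℕ} (hb : ∀ i, b (i + 1) ≤ b i + 1)
    (hmono : ∀ i, swapEvenOdd (b i) ≤ swapEvenOdd (b (i + 1))) :
    ∃ i₀, ∀ j, b (i₀ + j) = b i₀ := by
  have step i := eq_or_odd_even_of_swapEvenOdd_le (hmono i) (hb i)
  by_cases heven : ∃ i, Even (b i)
  · obtain ⟨i₀, hi₀⟩ := heven
    refine ⟨i₀, fun j => ?_⟩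
    induction j with
    | zero => rfl
    | succ j ih =>
      rcases step (i₀ + j) with h | ⟨hodd, -⟩
      · rw [← add_assoc, h, ih]
      · exact absurd hi₀ (ih ▸ Nat.not_even_iff_odd.2 hodd)
  · push Not at heven
    refine ⟨0, fun j => ?_⟩
    induction j with
    | zero => rfl
    | succ j ih =>
      rcases step (0 + j) with h | ⟨-, heven'⟩
      · rw [← add_assoc, h, ih]
      · exact absurd heven' (heven _)

lemma exists_equiv_nat_lt_of_finite_sublevel {α : Type*} [Countable α] [Infinite α] (f : α → ℕ)
    (hf : ∀ n, {a | f a ≤ n}.Finite) : ∃ e : α ≃ ℕ, ∀ a b, f a < f b → e a < e b := by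
  obtain ⟨i, hi⟩ := exists_injective_nat α
  let K : α → ℕ ×ₗ ℕ := fun a => toLex (f a, i a)
  have hK : Injective K := fun a b hab => hi (congrArg (fun x => (ofLex x).2) hab)
  have hlow a : {b | K b < K a}.Finite := by
    refine (hf (f a)).subset fun b hb => ?_
    rcases Prod.Lex.lt_iff.1 hb with h | ⟨h, -⟩
    exacts [h.le, h.le]
  let c : α → ℕ := fun a => {b | K b < K a}.ncard
  have hc : ∀ a b, K a < K b → c a < c b := fun a b hab =>
    ncard_lt_ncard ⟨fun x hx => lt_trans hx hab, fun h => lt_irrefl (K a) (h hab)⟩ (hlow b)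
  have hc_inj : Injective c := by
    intro a b hab
    rcases lt_trichotomy (K a) (K b) with h | h | h
    exacts [absurd hab (hc a b h).ne, hK h, absurd hab (hc b a h).ne']
  have : Infinite (range c) := (infinite_range_of_injective hc_inj).to_subtype
  let e : α ≃ ℕ :=
    (Equiv.ofInjective c hc_inj).trans (Nat.Subtype.orderIsoOfNat (range c)).symm.toEquiv
  refine ⟨e, fun a b hab => ?_⟩
  change (Nat.Subtype.orderIsoOfNat _).symm _ < (Nat.Subtype.orderIsoOfNat _).symm _
  rw [OrderIso.lt_iff_lt]
  exact hc a b (Prod.Lex.lt_iff.2 (Or.inl hab))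

lemma exists_equiv_nat_not_exists_increasing_path {α : Type*} [Countable α] [Infinite α]
    {r : α → α → Prop} (hr : ∀ a, {b | r a b}.Finite) :
    ∃ e : α ≃ ℕ, ¬ ∃ w : ℕ → α, ∀ i, r (w i) (w (i + 1)) ∧ e (w i) < e (w (i + 1)) := by
  obtain ⟨β, hβ, hβr⟩ := exists_layering_of_finite_out hr
  obtain ⟨e, he⟩ := exists_equiv_nat_lt_of_finite_sublevel (fun a => swapEvenOdd (β a))
    fun n => (hβ (n + 1)).subset fun a ha => (le_swapEvenOdd_add_one _).trans (by simpa using ha)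
  refine ⟨e, fun ⟨w, hw⟩ => ?_⟩
  obtain ⟨i₀, hconst⟩ := exists_forall_eq_of_swapEvenOdd_monotone (b := fun i => β (w i))
    (fun i => hβr _ _ (hw i).1) (fun i => not_lt.1 fun h => (he _ _ h).not_gt (hw i).2)
  have hinj : Injective fun j => w (i₀ + j) :=
    (strictMono_nat_of_lt_succ fun j => (hw (i₀ + j)).2 : StrictMono fun j => e (w (i₀ + j)))
      |>.injective.of_comp
  exact (hβ (β (w i₀))).not_infinite <|
    (infinite_range_of_injective hinj).mono (range_subset_iff.2 fun j => (hconst j).le)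

lemma exists_equiv_int_extend {V : Type*} [Countable V] {Y : Set V} (e : Y ≃ ℕ)
    (hYc : Yᶜ.Infinite) : ∃ φ : V ≃ ℤ, (∀ y : Y, φ y = e y) ∧ ∀ v ∉ Y, φ v < 0 := by
  classical
  have : Infinite ↥Yᶜ := hYc.to_subtype
  obtain ⟨e'⟩ : Nonempty (↥Yᶜ ≃ ℕ) := nonempty_equiv_of_countable
  refine ⟨(Equiv.Set.sumCompl Y).symm.trans ((e.sumCongr e').trans Equiv.intEquivNatSumNat.symm),
    fun y => ?_, fun v hv => ?_⟩
  · simp only [Equiv.trans_apply, Equiv.Set.sumCompl_symm_apply_of_mem y.2, Subtype.coe_eta,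
      Equiv.sumCongr_apply, Sum.map_inl]
    rfl
  · simp only [Equiv.trans_apply, Equiv.Set.sumCompl_symm_apply_of_notMem hv,
      Equiv.sumCongr_apply, Sum.map_inr]
    exact Int.negSucc_lt_zero _

lemma exists_forall_nonneg_of_strictMono {u : ℕ → ℤ} (hu : StrictMono u) :
    ∃ k, ∀ j, 0 ≤ u (k + j) := by
  have hlin n : u 0 + n ≤ u n := by
    induction n with
    | zero => simp
    | succ n ih => have := hu n.lt_add_one; push_cast; omega
  exact ⟨(-u 0).toNat, fun j => by have := hlin ((-u 0).toNat + j); push_cast at this; omega⟩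

section Digraph

variable {V : Type*} (E : Set (V × V))

lemma exists_equiv_int_not_exists_increasing_path [Countable V] {Y : Set V} (hY : Y.Infinite)
    (hYc : Yᶜ.Infinite) (hfin : ∀ v ∈ Y, {u | u ∈ Y ∧ (v, u) ∈ E}.Finite) :
    ∃ φ : V ≃ ℤ, ¬ ∃ w : ℕ → V, ∀ i, (w i, w (i + 1)) ∈ E ∧ φ (w i) < φ (w (i + 1)) := by
  have : Infinite Y := hY.to_subtype
  obtain ⟨e, he⟩ := exists_equiv_nat_not_exists_increasing_path (r := fun y z : Y => (y.1, z.1) ∈ E)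
    fun y => (hfin y y.2).preimage Subtype.val_injective.injOn |>.subset fun z hz => ⟨z.2, hz⟩
  obtain ⟨φ, hφY, hφYc⟩ := exists_equiv_int_extend e hYc
  refine ⟨φ, fun ⟨w, hw⟩ => ?_⟩
  -- the labels increase along `w`, so it ends up among the nonnegative labels, i.e. inside `Y`
  obtain ⟨k, hk⟩ := exists_forall_nonneg_of_strictMono (u := fun i => φ (w i))
    (strictMono_nat_of_lt_succ fun i => (hw i).2)
  have hkY j : w (k + j) ∈ Y := by_contra fun h => (hk j).not_gt (hφYc _ h)
  refine he ⟨fun j => ⟨w (k + j), hkY j⟩, fun j => ⟨(hw (k + j)).1, ?_⟩⟩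
  have := (hw (k + j)).2
  rw [← Subtype.coe_mk (w (k + j)) (hkY j), ← Subtype.coe_mk (w (k + j + 1)) (hkY (j + 1)),
    hφY, hφY] at this
  exact_mod_cast this

lemma infinite_setOf_finite_outdeg {V₁ : Set V} (hV₁ : V₁.Infinite)
    (h : ∀ W ⊆ V₁, W.Nonempty → ∃ v ∈ W, {u | u ∈ W ∧ (v, u) ∈ E}.Finite) :
    {v ∈ V₁ | {u | u ∈ V₁ ∧ (v, u) ∈ E}.Finite}.Infinite := by
  intro hY
  obtain ⟨v, hv, hvfin⟩ := h _ sdiff_subset (hV₁.sdiff hY).nonempty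
  refine hv.2 ⟨hv.1, (hvfin.union hY).subset fun u hu => ?_⟩
  by_cases huY : u ∈ {v ∈ V₁ | {u | u ∈ V₁ ∧ (v, u) ∈ E}.Finite}
  exacts [Or.inr huY, Or.inl ⟨⟨hu.1, huY⟩, hu.2⟩]

lemma exists_chain_of_forall_exists {α : Type*} {s : Set α} {R : α → α → Prop}
    (hs : s.Nonempty) (h : ∀ a ∈ s, ∃ b ∈ s, R a b) : ∃ w : ℕ → α, ∀ n, R (w n) (w (n + 1)) := by
  choose f hfs hfR using h
  let g : s → s := fun a => ⟨f a a.2, hfs a a.2⟩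
  refine ⟨fun n => (g^[n] ⟨_, hs.some_mem⟩).1, fun n => ?_⟩
  change R (g^[n] _).1 (g^[n + 1] _).1
  rw [iterate_succ_apply']
  exact hfR _ _

lemma exists_increasing_path_of_infinite_outdeg (φ : V → ℤ) (hφ : Injective φ) {W : Set V}
    (hW : W.Nonempty) (hbdd : BddBelow (φ '' W))
    (hdeg : ∀ v ∈ W, {u | u ∈ W ∧ (v, u) ∈ E}.Infinite) :
    ∃ w : ℕ → V, Injective w ∧ ∀ i, (w i, w (i + 1)) ∈ E ∧ φ (w i) < φ (w (i + 1)) := by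
  obtain ⟨m, hm⟩ := hbdd
  have hnext : ∀ v ∈ W, ∃ u ∈ W, (v, u) ∈ E ∧ φ v < φ u := by
    intro v hv
    obtain ⟨u, ⟨huW, huE⟩, hu⟩ :=
      ((hdeg v hv).sdiff ((finite_Icc m (φ v)).preimage hφ.injOn)).nonempty
    exact ⟨u, huW, huE, lt_of_not_ge fun h => hu ⟨hm (mem_image_of_mem φ huW), h⟩⟩
  obtain ⟨w, hw⟩ := exists_chain_of_forall_exists hW hnext
  exact ⟨w, (strictMono_nat_of_lt_succ fun i => (hw i).2 : StrictMono (φ ∘ w)).injective.of_comp, hw⟩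

end Digraph

theorem stmt15_general {V : Type*} [Countable V] (E : Set (V × V)) :
    (∀ V₁ : Set V, V₁.Infinite → V₁ᶜ.Infinite →
      ∃ W₁ ⊆ V₁, W₁.Nonempty ∧ ∀ v ∈ W₁, {u | u ∈ W₁ ∧ (v, u) ∈ E}.Infinite) ↔
    (∀ φ : V ≃ ℤ, ∃ w : ℕ → V, Function.Injective w ∧
      ∀ i, (w i, w (i + 1)) ∈ E ∧ φ (w i) < φ (w (i + 1))) := by
  constructor
  · intro h φ
    have hsurj : ∀ s : Set ℤ, s ⊆ range φ := fun s => φ.surjective.range_eq ▸ subset_univ s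
    obtain ⟨W, hWV, hW, hdeg⟩ := h (φ ⁻¹' Ici 0) ((Ici_infinite 0).preimage (hsurj _))
      (by rw [← preimage_compl, compl_Ici]; exact (Iio_infinite 0).preimage (hsurj _))
    exact exists_increasing_path_of_infinite_outdeg E φ φ.injective hW
      ⟨0, forall_mem_image.2 fun v hv => hWV hv⟩ hdeg
  · intro h V₁ hV₁ hV₁c
    by_contra hW
    push Not at hW
    obtain ⟨φ, hφ⟩ := exists_equiv_int_not_exists_increasing_path E
      (infinite_setOf_finite_outdeg E hV₁ hW) (hV₁c.mono (compl_subset_compl.2 (sep_subset _ _)))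
      fun v hv => hv.2.subset fun u hu => ⟨hu.1.1, hu.2⟩
    obtain ⟨w, -, hw⟩ := h φ
    exact hφ ⟨w, hw⟩

theorem stmt15 {V : Type*} [Countable V] [Infinite V] (E : Set (V × V)) :
    (∀ V₁ : Set V, V₁.Infinite → V₁ᶜ.Infinite →
      ∃ W₁ ⊆ V₁, W₁.Nonempty ∧ ∀ v ∈ W₁, {u | u ∈ W₁ ∧ (v, u) ∈ E}.Infinite) ↔
    (∀ φ : V ≃ ℤ, ∃ w : ℕ → V, Function.Injective w ∧
      ∀ i, (w i, w (i + 1)) ∈ E ∧ φ (w i) < φ (w (i + 1))) :=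
  stmt15_general E
end

section
/- Let D=(V,E) be a countable directed graph and let (V_i)_{i ∈ ℕ} be a partition of V such that: (a) for each i there exists an injection φ_i : V_i → ℕ such that the induced subgraph D[V_i] contains no infinite increasing directed path with respect to φ_i; and (b) for every i and every x ∈ V_i the set {y ∈ ⋃_{j>i} V_j : (x,y) ∈ E} is finite. Then there exists an injection φ: V → ℕ such that D contains no infinite increasing directed path with respect to φ. -/
/-!
Write `lab v := φ_{P v} v`. Enumerate `V` and place its vertices in finite stages: stage `n` adds
the closure of the `n`-th vertex under the rule "a vertex with an in-neighbour in an earlier stage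
drags along its forward neighbours and the vertices of its own class with smaller label". The
closure is finite: along a chain of such steps the class never decreases and stays bounded (the
earlier stages are finite and have finitely many forward neighbours), and inside one class the
label decreases.

Order the vertices by (stage, whether they have an in-neighbour in an earlier stage, class
descending, label ascending) and let `φ` be the rank in this order. An increasing path cannot stay
in finitely many stages, so some vertex on it has an in-neighbour in an earlier stage, and then so
do all later ones. The next vertex of the path is never dragged along by the current one, hence
the class is nonincreasing, thus eventually constant, and from then on the label increases inside
one class, contradicting (a).
-/

open Function Relation

theorem Relation.finite_setOf_reflTransGen {α : Type*} {r : α → α → Prop}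
    (hwf : WellFounded (flip r)) (hfin : ∀ a, {b | r a b}.Finite) (a : α) :
    {b | ReflTransGen r a b}.Finite := by
  induction a using hwf.induction with
  | _ a ih =>
    refine (((hfin a).biUnion fun c hc => ih c hc).insert a).subset fun b hb => ?_
    rcases hb.cases_head with rfl | ⟨c, hac, hcb⟩
    · exact Set.mem_insert _ _
    · exact Set.mem_insert_of_mem _ (Set.mem_biUnion hac hcb)

theorem exists_injective_nat_of_finite_lt {α β : Type*} [LinearOrder β] (f : α → β)
    (hf : Injective f) (h : ∀ a, {b | f b < f a}.Finite) :
    ∃ φ : α → ℕ, Injective φ ∧ ∀ a b, φ a < φ b → f a < f b := by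
  let : LinearOrder α := LinearOrder.lift' f hf
  have hφ : StrictMono fun a => (Set.Iio a).ncard := fun a b hab =>
    Set.ncard_lt_ncard (Set.Iio_ssubset_Iio hab) (h b)
  exact ⟨_, hφ.injective, fun a b => hφ.lt_iff_lt.1⟩

section Layering

variable {V : Type*} (E : Set (V × V)) (P lab : V → ℕ)

def mustPrecede (v : V) : Set V :=
  {y | (v, y) ∈ E ∧ P v < P y} ∪ {y | P y = P v ∧ lab y < lab v}

def HasInNeighborIn (S : Set V) (v : V) : Prop := ∃ y ∈ S, (y, v) ∈ E

def Requires (S : Set V) (p c : V) : Prop :=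
  HasInNeighborIn E S p ∧ c ∈ mustPrecede E P lab p

def requirementClosure (S : Set V) (x : V) : Set V :=
  {u | ReflTransGen (Requires E P lab S) x u}

def placed (s : ℕ → V) : ℕ → Set V
  | 0 => ∅
  | n + 1 => placed s n ∪ requirementClosure E P lab (placed s n) (s n)

def EntersLate (stage : V → ℕ) (v : V) : Prop := ∃ y, stage y < stage v ∧ (y, v) ∈ E

structure IsLayering (stage : V → ℕ) : Prop where
  finite_stage_le : ∀ n, {v | stage v ≤ n}.Finite
  stage_le_of_mem_mustPrecede :
    ∀ {v}, EntersLate E stage v → ∀ g ∈ mustPrecede E P lab v, stage g ≤ stage v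

-- `False < True` in `Prop`: inside a stage, the vertices entering late come last.
def layerKey (stage : V → ℕ) (v : V) : ℕ ×ₗ Prop ×ₗ ℕᵒᵈ ×ₗ ℕ :=
  toLex (stage v, toLex (EntersLate E stage v, toLex (OrderDual.toDual (P v), lab v)))

variable {E P lab}

theorem mustPrecede_finite (hfwd : ∀ x, {y | (x, y) ∈ E ∧ P x < P y}.Finite)
    (hlab : Injective fun v => (P v, lab v)) (v : V) : (mustPrecede E P lab v).Finite := by
  refine (hfwd v).union <| Set.Finite.subset
    (((Set.finite_singleton (P v)).prod (Set.finite_Iio (lab v))).preimage hlab.injOn) ?_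
  rintro y ⟨hy, hlt⟩
  exact ⟨hy, hlt⟩

theorem exists_bound_of_hasInNeighborIn (hfwd : ∀ x, {y | (x, y) ∈ E ∧ P x < P y}.Finite)
    {S : Set V} (hS : S.Finite) : ∃ M, ∀ v, HasInNeighborIn E S v → P v ≤ M := by
  obtain ⟨M, hM⟩ := ((hS.union (hS.biUnion fun y _ => hfwd y)).image P).bddAbove
  refine ⟨M, fun v ⟨y, hy, hyv⟩ => ?_⟩
  rcases le_or_gt (P v) (P y) with h | h
  · exact h.trans (hM ⟨y, Or.inl hy, rfl⟩)
  · exact hM ⟨v, Or.inr (Set.mem_biUnion hy ⟨hyv, h⟩), rfl⟩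

theorem wellFounded_flip_requires (hfwd : ∀ x, {y | (x, y) ∈ E ∧ P x < P y}.Finite)
    {S : Set V} (hS : S.Finite) : WellFounded (flip (Requires E P lab S)) := by
  classical
  obtain ⟨M, hM⟩ := exists_bound_of_hasInNeighborIn hfwd hS
  -- a vertex without in-neighbour in `S` requires nothing, so it may sit at the bottom
  let μ : V → WithBot (ℕ ×ₗ ℕ) := fun v =>
    if HasInNeighborIn E S v then ↑(toLex (M - P v, lab v)) else ⊥
  refine Subrelation.wf (fun {c p} (hpc : Requires E P lab S p c) => ?_)
    (InvImage.wf μ wellFounded_lt)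
  obtain ⟨hp, hc⟩ := hpc
  change μ c < μ p
  simp only [μ, if_pos hp]
  split_ifs with hc'
  · refine WithBot.coe_lt_coe.2 (Prod.Lex.toLex_lt_toLex.2 ?_)
    have := hM c hc'
    rcases hc with ⟨-, hlt⟩ | ⟨heq, hlt⟩
    · exact Or.inl (by omega)
    · exact Or.inr ⟨by rw [heq], hlt⟩
  · exact WithBot.bot_lt_coe _

theorem requirementClosure_finite (hfwd : ∀ x, {y | (x, y) ∈ E ∧ P x < P y}.Finite)
    (hlab : Injective fun v => (P v, lab v)) {S : Set V} (hS : S.Finite) (x : V) :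
    (requirementClosure E P lab S x).Finite :=
  Relation.finite_setOf_reflTransGen (wellFounded_flip_requires hfwd hS)
    (fun p => (mustPrecede_finite hfwd hlab p).subset fun _ hc => hc.2) x

theorem placed_finite (hfwd : ∀ x, {y | (x, y) ∈ E ∧ P x < P y}.Finite)
    (hlab : Injective fun v => (P v, lab v)) (s : ℕ → V) (n : ℕ) :
    (placed E P lab s n).Finite := by
  induction n with
  | zero => exact Set.finite_empty
  | succ n ih => exact ih.union (requirementClosure_finite hfwd hlab ih _)

theorem placed_mono (s : ℕ → V) : Monotone (placed E P lab s) :=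
  monotone_nat_of_le_succ fun _ => Set.subset_union_left

theorem exists_isLayering [Nonempty V] [Countable V]
    (hfwd : ∀ x, {y | (x, y) ∈ E ∧ P x < P y}.Finite)
    (hlab : Injective fun v => (P v, lab v)) : ∃ stage : V → ℕ, IsLayering E P lab stage := by
  classical
  obtain ⟨s, hs⟩ := exists_surjective_nat V
  have hex : ∀ v, ∃ n, v ∈ placed E P lab s (n + 1) := fun v => by
    obtain ⟨n, rfl⟩ := hs v
    exact ⟨n, Or.inr ReflTransGen.refl⟩
  have hmem : ∀ v n, v ∈ placed E P lab s n ↔ Nat.find (hex v) < n := by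
    refine fun v n => ⟨fun h => ?_, fun h => placed_mono s h (Nat.find_spec (hex v))⟩
    cases n with
    | zero => exact h.elim
    | succ n => exact Nat.lt_succ_of_le (Nat.find_min' _ h)
  refine ⟨fun v => Nat.find (hex v), fun n => ?_, ?_⟩
  · exact (placed_finite hfwd hlab s (n + 1)).subset fun v hv =>
      (hmem v _).2 (Nat.lt_succ_of_le hv)
  · rintro v ⟨y, hyv, hyE⟩ g hg
    have hv : v ∈ requirementClosure E P lab (placed E P lab s (Nat.find (hex v))) (s _) :=
      (Nat.find_spec (hex v)).resolve_left fun h => lt_irrefl _ ((hmem v _).1 h)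
    have hg' : g ∈ placed E P lab s (Nat.find (hex v) + 1) :=
      Or.inr (hv.tail ⟨⟨y, (hmem y _).2 hyv, hyE⟩, hg⟩)
    exact Nat.lt_succ_iff.1 ((hmem g _).1 hg')

variable {stage : V → ℕ}

theorem layerKey_injective (hlab : Injective fun v => (P v, lab v)) :
    Injective (layerKey E P lab stage) := fun u v h => by
  simp only [layerKey, toLex_inj, Prod.mk.injEq, OrderDual.toDual_inj] at h
  exact hlab (Prod.ext h.2.2.1 h.2.2.2)

theorem stage_le_of_layerKey_lt {u v : V}
    (h : layerKey E P lab stage u < layerKey E P lab stage v) : stage u ≤ stage v :=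
  (Prod.Lex.toLex_lt_toLex'.1 h).1

theorem IsLayering.finite_layerKey_lt (hL : IsLayering E P lab stage) (v : V) :
    {u | layerKey E P lab stage u < layerKey E P lab stage v}.Finite :=
  (hL.finite_stage_le (stage v)).subset fun _ => stage_le_of_layerKey_lt

theorem IsLayering.layerKey_lt_of_mem_mustPrecede (hL : IsLayering E P lab stage) {v g : V}
    (hv : EntersLate E stage v) (hg : g ∈ mustPrecede E P lab v) :
    layerKey E P lab stage g < layerKey E P lab stage v := by
  refine Prod.Lex.toLex_lt_toLex'.2 ⟨hL.stage_le_of_mem_mustPrecede hv g hg, fun _ => ?_⟩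
  refine Prod.Lex.toLex_lt_toLex'.2 ⟨fun _ => hv, fun _ => Prod.Lex.toLex_lt_toLex.2 ?_⟩
  rcases hg with ⟨-, hlt⟩ | ⟨heq, hlt⟩
  · exact Or.inl (OrderDual.toDual_lt_toDual.2 hlt)
  · exact Or.inr ⟨by rw [heq], hlt⟩

theorem EntersLate.of_layerKey_lt {u z : V} (hu : EntersLate E stage u) (hE : (u, z) ∈ E)
    (h : layerKey E P lab stage u < layerKey E P lab stage z) : EntersLate E stage z := by
  obtain ⟨hle, hinner⟩ := Prod.Lex.toLex_lt_toLex'.1 h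
  rcases hle.lt_or_eq with hlt | heq
  · exact ⟨u, hlt, hE⟩
  · exact (Prod.Lex.toLex_lt_toLex'.1 (hinner heq)).1 hu

theorem IsLayering.class_le_of_layerKey_lt (hL : IsLayering E P lab stage)
    (hlab : Injective fun v => (P v, lab v)) {u z : V} (hu : EntersLate E stage u)
    (hE : (u, z) ∈ E) (h : layerKey E P lab stage u < layerKey E P lab stage z) :
    P z ≤ P u ∧ (P z = P u → lab u < lab z) := by
  have hz : z ∉ mustPrecede E P lab u := fun hz =>
    lt_asymm h (hL.layerKey_lt_of_mem_mustPrecede hu hz)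
  refine ⟨not_lt.1 fun hlt => hz (Or.inl ⟨hE, hlt⟩), fun hP => ?_⟩
  refine (not_lt.1 fun hlt => hz (Or.inr ⟨hP, hlt⟩)).lt_of_ne fun hl => h.ne ?_
  rw [hlab (Prod.ext hP.symm hl)]

theorem IsLayering.exists_entersLate_of_path (hL : IsLayering E P lab stage) {w : ℕ → V}
    (hw : Injective w) (hE : ∀ n, (w n, w (n + 1)) ∈ E) : ∃ m, EntersLate E stage (w m) := by
  by_contra! hnone
  have hanti : Antitone (stage ∘ w) :=
    antitone_nat_of_succ_le fun n => not_lt.1 fun hlt => hnone (n + 1) ⟨w n, hlt, hE n⟩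
  refine Set.infinite_range_of_injective hw ((hL.finite_stage_le (stage (w 0))).subset ?_)
  rintro _ ⟨n, rfl⟩
  exact hanti n.zero_le

theorem IsLayering.exists_tail_in_one_class (hL : IsLayering E P lab stage)
    (hlab : Injective fun v => (P v, lab v)) {w : ℕ → V} (hw : Injective w)
    (hpath : ∀ n, (w n, w (n + 1)) ∈ E ∧
      layerKey E P lab stage (w n) < layerKey E P lab stage (w (n + 1))) :
    ∃ N, ∀ n, P (w (N + n)) = P (w N) ∧ lab (w (N + n)) < lab (w (N + n + 1)) := by
  obtain ⟨m, hm⟩ := hL.exists_entersLate_of_path hw fun n => (hpath n).1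
  have hlate : ∀ n, EntersLate E stage (w (m + n)) := by
    intro n
    induction n with
    | zero => exact hm
    | succ n ih => exact ih.of_layerKey_lt (hpath _).1 (hpath _).2
  have hstep n := hL.class_le_of_layerKey_lt hlab (hlate n) (hpath (m + n)).1 (hpath (m + n)).2
  obtain ⟨k, hk⟩ := WellFoundedLT.antitone_chain_condition (f := fun n => P (w (m + n)))
    (antitone_nat_of_succ_le fun n => (hstep n).1)
  have hconst : ∀ n, P (w (m + (k + n))) = P (w (m + k)) := fun n =>
    (hk (k + n) (Nat.le_add_right k n)).symm
  refine ⟨m + k, fun n => ?_⟩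
  rw [Nat.add_assoc m k n]
  exact ⟨hconst n, (hstep (k + n)).2 ((hconst (n + 1)).trans (hconst n).symm)⟩

end Layering

theorem stmt18 {V : Type*} [Countable V] [Infinite V] (E : Set (V × V))
    (P : V → ℕ)  -- the partition of `V`: the class `V_i` is `{v | P v = i}`
    (ha : ∀ i : ℕ, ∃ φi : V → ℕ, Set.InjOn φi {v | P v = i} ∧
      ¬ ∃ w : ℕ → V, Function.Injective w ∧
        ∀ n, P (w n) = i ∧ (w n, w (n + 1)) ∈ E ∧ φi (w n) < φi (w (n + 1)))
    (hb : ∀ x : V, {y | (x, y) ∈ E ∧ P x < P y}.Finite) :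
    ∃ φ : V → ℕ, Function.Injective φ ∧
      ¬ ∃ w : ℕ → V, Function.Injective w ∧
        ∀ n, (w n, w (n + 1)) ∈ E ∧ φ (w n) < φ (w (n + 1)) := by
  choose Φ hΦinj hΦpath using ha
  set lab : V → ℕ := fun v => Φ (P v) v
  have hlab : Injective fun v => (P v, lab v) := fun u v huv => by
    obtain ⟨hP, hl⟩ := Prod.mk.inj huv
    exact hΦinj (P v) hP rfl (by simpa only [lab, hP] using hl)
  obtain ⟨stage, hL⟩ := exists_isLayering hb hlab
  obtain ⟨φ, hφinj, hφ⟩ := exists_injective_nat_of_finite_lt (layerKey E P lab stage)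
    (layerKey_injective hlab) hL.finite_layerKey_lt
  refine ⟨φ, hφinj, fun ⟨w, hw, hpath⟩ => ?_⟩
  obtain ⟨N, hN⟩ := hL.exists_tail_in_one_class hlab hw
    fun n => ⟨(hpath n).1, hφ _ _ (hpath n).2⟩
  refine hΦpath (P (w N)) ⟨fun n => w (N + n), hw.comp (add_right_injective N), fun n => ?_⟩
  have hlt : lab (w (N + n)) < lab (w (N + (n + 1))) := (hN n).2
  simp only [lab, (hN n).1, (hN (n + 1)).1] at hlt
  exact ⟨(hN n).1, (hpath (N + n)).1, hlt⟩
end
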